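/- arXiv:0911.5036 — 3 statements merged into one kernel-verified Lean document; each statement's English description precedes it below -/
import Mathlib

section
/- Let m ≥ 2 and let S be a subset of so(m,ℂ) (the skew-symmetric complex m×m matrices) that is invariant under the adjoint action of SO(m,ℂ), i.e. A v A⁻¹ ∈ S for all v ∈ S and all A ∈ SO(m,ℂ). Let R be a symmetric bilinear form on so(m,ℝ), extended complex-bilinearly to so(m,ℂ), and let 𝓡 denote the corresponding self-adjoint operator on so(m,ℝ) (extended ℂ-linearly) with respect to the trace inner product ⟨X,Y⟩ = −tr(XY). Suppose R(ω, ω̄) ≥ 0 for every ω ∈ S, and v ∈ S is a nonzero element with R(v, v̄) = 0. Then (R² + R#)(v, v̄) ≥ 0, where R²(X,Y) := ⟨𝓡X, 𝓡Y⟩ and R#(X,Y) := −tr(ad_X ∘ 𝓡 ∘ ad_Y ∘ 𝓡), with ad_X Y := XY − YX. -/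
/-!
Statement 0 (special case of Wilking's theorem, Theorem B.1 of the paper):
if `R` is (the complex-bilinear extension of) a symmetric bilinear form on `so(m,ℝ)`,
with associated self-adjoint operator `𝓡` (w.r.t. `⟨X,Y⟩ = -tr(XY)`), nonnegative on an
`SO(m,ℂ)`-invariant set `S ⊆ so(m,ℂ)` in the Hermitian sense, and `v ∈ S` is nonzero
with `R(v,v̄) = 0`, then `(R² + R#)(v,v̄) ≥ 0`.

We encode `R` via the operator `𝓡` (here called `T`): `R X Y = ⟨T X, Y⟩ = -tr((T X) ⬝ Y)`.
-/

open Matrix ComplexOrder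

noncomputable section

/-- The Lie algebra `so(m,ℂ)` of skew-symmetric complex `m × m` matrices,
as a complex submodule of the matrix space. -/
def soC (m : ℕ) : Submodule ℂ (Matrix (Fin m) (Fin m) ℂ) where
  carrier := {X | Xᵀ = -X}
  add_mem' := by
    intro a b ha hb
    simp only [Set.mem_setOf_eq] at *
    rw [transpose_add, ha, hb, neg_add]
  zero_mem' := by simp
  smul_mem' := by
    intro c x hx
    simp only [Set.mem_setOf_eq] at *
    rw [transpose_smul, hx, smul_neg]

namespace soC

variable {m : ℕ}

lemma mem_iff {X : Matrix (Fin m) (Fin m) ℂ} : X ∈ soC m ↔ Xᵀ = -X := Iff.rfl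

/-- Entrywise complex conjugation `ω ↦ ω̄` on `so(m,ℂ)`. -/
def conj (X : soC m) : soC m :=
  ⟨(X : Matrix (Fin m) (Fin m) ℂ).map (starRingEnd ℂ), by
    have hX : (X : Matrix (Fin m) (Fin m) ℂ)ᵀ = -(X : Matrix (Fin m) (Fin m) ℂ) := X.2
    rw [mem_iff]
    ext i j
    have h := congrFun (congrFun hX i) j
    simp only [transpose_apply, neg_apply] at h
    simp only [transpose_apply, map_apply, neg_apply, h, map_neg]
    exact map_neg (starRingEnd ℂ) _⟩

/-- The adjoint map `ad_v = [v, ·]` as a `ℂ`-linear endomorphism of `so(m,ℂ)`. -/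
def ad (v : soC m) : soC m →ₗ[ℂ] soC m where
  toFun X := ⟨(v : Matrix (Fin m) (Fin m) ℂ) * X - (X : Matrix (Fin m) (Fin m) ℂ) * v, by
    rw [mem_iff]
    have hv : (v : Matrix (Fin m) (Fin m) ℂ)ᵀ = -(v : Matrix (Fin m) (Fin m) ℂ) := v.2
    have hX : (X : Matrix (Fin m) (Fin m) ℂ)ᵀ = -(X : Matrix (Fin m) (Fin m) ℂ) := X.2
    rw [transpose_sub, transpose_mul, transpose_mul, hv, hX]
    noncomm_ring⟩
  map_add' X Y := by
    apply Subtype.ext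
    simp only [Submodule.coe_add]
    noncomm_ring
  map_smul' c X := by
    apply Subtype.ext
    simp only [Submodule.coe_smul, RingHom.id_apply]
    rw [Matrix.mul_smul, Matrix.smul_mul, smul_sub]

/-- The complex-bilinear extension of the trace inner product `⟨X,Y⟩ = -tr(XY)` on `so(m,ℝ)`. -/
def ip (X Y : soC m) : ℂ :=
  -Matrix.trace ((X : Matrix (Fin m) (Fin m) ℂ) * (Y : Matrix (Fin m) (Fin m) ℂ))

/-- The adjoint action `v ↦ A v A⁻¹` of `A ∈ SO(m,ℂ)` on `so(m,ℂ)`. -/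
def soAct (A : Matrix (Fin m) (Fin m) ℂ) (hA : Aᵀ * A = 1) (v : soC m) : soC m :=
  ⟨A * (v : Matrix (Fin m) (Fin m) ℂ) * A⁻¹, by
    have hAinv : A⁻¹ = Aᵀ := inv_eq_left_inv hA
    have hv : (v : Matrix (Fin m) (Fin m) ℂ)ᵀ = -(v : Matrix (Fin m) (Fin m) ℂ) := v.2
    rw [mem_iff, hAinv, transpose_mul, transpose_mul, transpose_transpose, hv]
    noncomm_ring⟩

end soC

namespace soC

variable {m : ℕ}

/- ### new lemmas -/

@[simp] lemma conj_val (X : soC m) :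
    (conj X : Matrix (Fin m) (Fin m) ℂ) = (X : Matrix (Fin m) (Fin m) ℂ).map (starRingEnd ℂ) := rfl

@[simp] lemma conj_conj (X : soC m) : conj (conj X) = X := by
  apply Subtype.ext; ext i j; simp

lemma conj_add (X Y : soC m) : conj (X + Y) = conj X + conj Y := by
  apply Subtype.ext; ext i j; simp

lemma conj_smul (c : ℂ) (X : soC m) : conj (c • X) = (starRingEnd ℂ c) • conj X := by
  apply Subtype.ext; ext i j; simp

lemma conj_neg (X : soC m) : conj (-X) = -(conj X) := by
  apply Subtype.ext; ext i j; simp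

lemma ip_symm (X Y : soC m) : ip X Y = ip Y X := by
  unfold ip; rw [Matrix.trace_mul_comm]

lemma ip_smul_left (c : ℂ) (X Y : soC m) : ip (c • X) Y = c * ip X Y := by
  show -Matrix.trace (((c • X : soC m) : Matrix (Fin m) (Fin m) ℂ) * (Y : Matrix (Fin m) (Fin m) ℂ)) = _
  rw [Submodule.coe_smul, Matrix.smul_mul, Matrix.trace_smul, smul_eq_mul]; unfold ip; ring

lemma ip_smul_right (c : ℂ) (X Y : soC m) : ip X (c • Y) = c * ip X Y := by
  show -Matrix.trace ((X : Matrix (Fin m) (Fin m) ℂ) * ((c • Y : soC m) : Matrix (Fin m) (Fin m) ℂ)) = _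
  rw [Submodule.coe_smul, Matrix.mul_smul, Matrix.trace_smul, smul_eq_mul]; unfold ip; ring

lemma ip_add_left (X Y Z : soC m) : ip (X + Y) Z = ip X Z + ip Y Z := by
  unfold ip; rw [Submodule.coe_add, Matrix.add_mul, Matrix.trace_add]; ring

lemma ip_add_right (X Y Z : soC m) : ip X (Y + Z) = ip X Y + ip X Z := by
  unfold ip; rw [Submodule.coe_add, Matrix.mul_add, Matrix.trace_add]; ring

lemma ip_neg_left (X Y : soC m) : ip (-X) Y = -ip X Y := by
  simp [ip, Matrix.neg_mul]

lemma ip_neg_right (X Y : soC m) : ip X (-Y) = -ip X Y := by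
  simp [ip, Matrix.mul_neg]

lemma trace_map_star (A : Matrix (Fin m) (Fin m) ℂ) :
    Matrix.trace (A.map (starRingEnd ℂ)) = starRingEnd ℂ (Matrix.trace A) := by
  simp [Matrix.trace, Matrix.diag, map_sum]

lemma ip_conj_conj (X Y : soC m) : ip (conj X) (conj Y) = starRingEnd ℂ (ip X Y) := by
  simp only [ip, conj_val]
  rw [← Matrix.map_mul, trace_map_star, map_neg]


end soC

namespace soC

variable {m : ℕ}

lemma skew_entry (x : soC m) (i j : Fin m) :
    (x : Matrix (Fin m) (Fin m) ℂ) j i = -(x : Matrix (Fin m) (Fin m) ℂ) i j := by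
  have h := congrFun (congrFun x.2 i) j
  simpa [Matrix.transpose_apply, Matrix.neg_apply] using h

lemma ip_conj_self (x : soC m) :
    ip (conj x) x = ((∑ i, ∑ j, Complex.normSq ((x : Matrix (Fin m) (Fin m) ℂ) i j) : ℝ) : ℂ) := by
  have h1 : ip (conj x) x
      = -∑ i, ∑ j, (starRingEnd ℂ ((x : Matrix (Fin m) (Fin m) ℂ) i j))
        * (x : Matrix (Fin m) (Fin m) ℂ) j i := by
    simp [ip, Matrix.trace, Matrix.diag, Matrix.mul_apply, Matrix.map_apply]
  rw [h1]
  rw [show -∑ i, ∑ j, (starRingEnd ℂ ((x : Matrix (Fin m) (Fin m) ℂ) i j))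
        * (x : Matrix (Fin m) (Fin m) ℂ) j i
      = ∑ i, ∑ j, (starRingEnd ℂ ((x : Matrix (Fin m) (Fin m) ℂ) i j))
        * (x : Matrix (Fin m) (Fin m) ℂ) i j by
    rw [neg_eq_iff_eq_neg, ← Finset.sum_neg_distrib]
    refine Finset.sum_congr rfl fun i _ => ?_
    rw [← Finset.sum_neg_distrib]
    refine Finset.sum_congr rfl fun j _ => ?_
    rw [skew_entry x i j]; ring]
  push_cast
  refine Finset.sum_congr rfl fun i _ => Finset.sum_congr rfl fun j _ => ?_
  rw [Complex.normSq_eq_conj_mul_self]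

/-- The inner-product-space core on `soC m` : `⟪x, y⟫ = -tr(x̄ y)`. -/
def core (m : ℕ) : InnerProductSpace.Core ℂ (soC m) where
  inner x y := ip (conj x) y
  conj_inner_symm x y := by
    show starRingEnd ℂ (ip (conj y) x) = ip (conj x) y
    rw [← ip_conj_conj, conj_conj, ip_symm]
  re_inner_nonneg x := by
    show 0 ≤ (ip (conj x) x).re
    rw [ip_conj_self]
    rw [Complex.ofReal_re]
    exact Finset.sum_nonneg fun i _ => Finset.sum_nonneg fun j _ => Complex.normSq_nonneg _
  add_left x y z := by
    show ip (conj (x + y)) z = ip (conj x) z + ip (conj y) z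
    rw [conj_add, ip_add_left]
  smul_left x y c := by
    show ip (conj (c • x)) y = starRingEnd ℂ c * ip (conj x) y
    rw [conj_smul, ip_smul_left]
  definite x hx := by
    have hx' : ip (conj x) x = 0 := hx
    rw [ip_conj_self] at hx'
    have h0 : (∑ i, ∑ j, Complex.normSq ((x : Matrix (Fin m) (Fin m) ℂ) i j) : ℝ) = 0 := by
      exact_mod_cast hx'
    have hz := (Finset.sum_eq_zero_iff_of_nonneg (fun i _ =>
      Finset.sum_nonneg fun j _ => Complex.normSq_nonneg _)).1 h0
    apply Subtype.ext
    ext i j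
    have hzi := (Finset.sum_eq_zero_iff_of_nonneg (fun j _ => Complex.normSq_nonneg _)).1
      (hz i (Finset.mem_univ i)) j (Finset.mem_univ j)
    simpa using Complex.normSq_eq_zero.1 hzi

lemma ad_conj (w x : soC m) : ad (conj w) (conj x) = conj (ad w x) := by
  apply Subtype.ext
  ext i j
  simp [ad, Matrix.mul_apply, Matrix.map_apply, Matrix.sub_apply, map_sum]

lemma ip_ad_skew (w x y : soC m) : ip (ad w x) y = -ip x (ad w y) := by
  have h : ∀ a b c : Matrix (Fin m) (Fin m) ℂ,
      Matrix.trace ((a * b - b * a) * c) = -Matrix.trace (b * (a * c - c * a)) := by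
    intro a b c
    rw [Matrix.sub_mul, Matrix.mul_sub, Matrix.trace_sub, Matrix.trace_sub,
      Matrix.mul_assoc a b c, Matrix.trace_mul_comm a (b * c),
      Matrix.mul_assoc b c a, Matrix.mul_assoc b a c]
    ring
  show -Matrix.trace (((w : Matrix (Fin m) (Fin m) ℂ) * (x : Matrix (Fin m) (Fin m) ℂ)
      - (x : Matrix (Fin m) (Fin m) ℂ) * (w : Matrix (Fin m) (Fin m) ℂ))
      * (y : Matrix (Fin m) (Fin m) ℂ))
    = - -Matrix.trace ((x : Matrix (Fin m) (Fin m) ℂ)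
      * ((w : Matrix (Fin m) (Fin m) ℂ) * (y : Matrix (Fin m) (Fin m) ℂ)
        - (y : Matrix (Fin m) (Fin m) ℂ) * (w : Matrix (Fin m) (Fin m) ℂ)))
  rw [h]

end soC

namespace soC

variable {m : ℕ}

set_option maxHeartbeats 1000000 in
lemma algebraic_part (T : soC m →ₗ[ℂ] soC m)
    (hTreal : ∀ X, T (conj X) = conj (T X))
    (hTsa : ∀ X Y, ip (T X) Y = ip X (T Y))
    (v : soC m)
    (hKEY : ∀ w : soC m, w ∈ LinearMap.range (ad v) → 0 ≤ ip (T w) (conj w)) :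
    0 ≤ ip (T v) (T (conj v))
      - LinearMap.trace ℂ (soC m) (ad v ∘ₗ T ∘ₗ ad (conj v) ∘ₗ T) := by
  letI cd : InnerProductSpace.Core ℂ (soC m) := core m
  letI : NormedAddCommGroup (soC m) := cd.toNormedAddCommGroup
  letI : InnerProductSpace ℂ (soC m) := InnerProductSpace.ofCore cd.toCore
  have hinner : ∀ x y : soC m, (inner ℂ x y : ℂ) = ip (conj x) y := fun _ _ => rfl
  set A : soC m →ₗ[ℂ] soC m := ad v with hA
  set A' : soC m →ₗ[ℂ] soC m := ad (conj v) with hA'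
  set W : Submodule ℂ (soC m) := LinearMap.range A with hW
  -- symmetric operator facts
  have hTsym : ∀ x y : soC m, (inner ℂ (T x) y : ℂ) = inner ℂ x (T y) := by
    intro x y
    rw [hinner, hinner, ← hTreal, hTsa]
  have hadjA : ∀ x y : soC m, (inner ℂ (A x) y : ℂ) = -inner ℂ x (A' y) := by
    intro x y
    rw [hinner, hinner, ← ad_conj, ip_ad_skew]
  have hadjA' : ∀ x z : soC m, (inner ℂ x (A z) : ℂ) = -inner ℂ (A' x) z := by
    intro x z
    rw [← inner_conj_symm, hadjA, map_neg, inner_conj_symm]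
  -- projection
  have hPmem : ∀ x : soC m, ((W.orthogonalProjectionOnto x : soC m)) ∈ W := fun x =>
    (W.orthogonalProjectionOnto x).2
  set P : soC m →ₗ[ℂ] soC m :=
    { toFun := fun x => ((W.orthogonalProjectionOnto x : W) : soC m)
      map_add' := by intro x y; show ((W.orthogonalProjectionOnto (x + y) : W) : soC m) = _; rw [map_add]; rfl
      map_smul' := by intro c x; show ((W.orthogonalProjectionOnto (c • x) : W) : soC m) = _; rw [_root_.map_smul]; rfl } with hPdef
  have hPapp : ∀ x : soC m, P x = (W.orthogonalProjectionOnto x : soC m) := fun _ => rfl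
  have hPid : ∀ x : soC m, x ∈ W → P x = x := by
    intro x hx
    rw [hPapp]
    exact congrArg _ (Submodule.orthogonalProjectionOnto_mem_subspace_eq_self (⟨x, hx⟩ : W))
  have hPsym : ∀ x y : soC m, (inner ℂ (P x) y : ℂ) = inner ℂ x (P y) := fun x y =>
    W.inner_starProjection_left_eq_right x y
  have hA'perp : ∀ x : soC m, x ∈ Wᗮ → A' x = 0 := by
    intro x hx
    have h1 : (inner ℂ x (A (A' x)) : ℂ) = -inner ℂ (A' x) (A' x) := hadjA' x (A' x)
    have h2 : (inner ℂ x (A (A' x)) : ℂ) = 0 :=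
      (Submodule.mem_orthogonal' W x).1 hx _ ⟨A' x, rfl⟩
    have h3 : (inner ℂ (A' x) (A' x) : ℂ) = 0 := by
      have := h1.symm.trans h2
      simpa [neg_eq_zero] using this
    exact inner_self_eq_zero.1 h3
  have hA'P : ∀ z : soC m, A' (P z) = A' z := by
    intro z
    have hperp : z - P z ∈ Wᗮ := Submodule.sub_starProjection_mem_orthogonal (K := W) z
    have h0 := hA'perp _ hperp
    rw [map_sub, sub_eq_zero] at h0
    exact h0.symm
  -- the compressed operator S = P T P and its spectral decomposition
  set S : soC m →ₗ[ℂ] soC m := P ∘ₗ T ∘ₗ P with hSdef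
  have hSapp : ∀ x, S x = P (T (P x)) := fun _ => rfl
  have hSsym : S.IsSymmetric := by
    intro x y
    show (inner ℂ (P (T (P x))) y : ℂ) = inner ℂ x (P (T (P y)))
    rw [hPsym, hTsym, hPsym]
  set nn : ℕ := Module.finrank ℂ (soC m) with hnn
  have hfin : Module.finrank ℂ (soC m) = nn := rfl
  set b := hSsym.eigenvectorBasis hfin with hbdef
  set μ := hSsym.eigenvalues hfin with hμdef
  have hb : ∀ i, S (b i) = (μ i : ℂ) • b i := fun i => hSsym.apply_eigenvectorBasis hfin i
  -- trace via orthonormal basis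
  have htr : ∀ f : soC m →ₗ[ℂ] soC m,
      LinearMap.trace ℂ (soC m) f = ∑ i, (inner ℂ (b i) (f (b i)) : ℂ) := by
    intro f
    rw [LinearMap.trace_eq_matrix_trace ℂ b.toBasis f, Matrix.trace]
    refine Finset.sum_congr rfl fun i _ => ?_
    rw [Matrix.diag_apply, LinearMap.toMatrix_apply, OrthonormalBasis.coe_toBasis,
      OrthonormalBasis.coe_toBasis_repr_apply, OrthonormalBasis.repr_apply_apply]
  -- trace rearrangement
  have hPA : ∀ x, P (A x) = A x := fun x => hPid _ ⟨x, rfl⟩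
  have hmid : ∀ z, A' (T (A z)) = A' (S (A z)) := by
    intro z
    rw [hSapp, hPA, hA'P]
  have htrace : LinearMap.trace ℂ (soC m) (A ∘ₗ T ∘ₗ A' ∘ₗ T)
      = -∑ i, (μ i : ℂ) * inner ℂ (A' (b i)) (T (A' (b i))) := by
    have e1 : A ∘ₗ T ∘ₗ A' ∘ₗ T = (A ∘ₗ T) * (A' ∘ₗ T) := LinearMap.ext fun x => rfl
    rw [e1, LinearMap.trace_mul_comm]
    have e2 : (A' ∘ₗ T) * (A ∘ₗ T) = A' ∘ₗ (S ∘ₗ (A ∘ₗ T)) := by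
      apply LinearMap.ext
      intro z
      exact hmid (T z)
    rw [e2]
    have e3 : A' ∘ₗ (S ∘ₗ (A ∘ₗ T)) = A' * (S ∘ₗ (A ∘ₗ T)) := LinearMap.ext fun x => rfl
    rw [e3, LinearMap.trace_mul_comm]
    have e4 : (S ∘ₗ (A ∘ₗ T)) * A' = S * ((A ∘ₗ (T ∘ₗ A'))) := LinearMap.ext fun x => rfl
    rw [e4, LinearMap.trace_mul_comm, htr]
    rw [← Finset.sum_neg_distrib]
    refine Finset.sum_congr rfl fun i _ => ?_
    show (inner ℂ (b i) ((A ∘ₗ (T ∘ₗ A')) (S (b i))) : ℂ) = _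
    rw [hb i, LinearMap.map_smul, inner_smul_right]
    have h5 : (inner ℂ (b i) ((A ∘ₗ (T ∘ₗ A')) (b i)) : ℂ) = -inner ℂ (A' (b i)) (T (A' (b i))) := by
      show (inner ℂ (b i) (A (T (A' (b i)))) : ℂ) = _
      rw [hadjA' (b i) (T (A' (b i)))]
    rw [h5]
    ring
  -- positivity facts
  have hposW : ∀ w : soC m, w ∈ W → (0:ℂ) ≤ inner ℂ w (T w) := by
    intro w hw
    rw [hinner, ip_symm]
    exact hKEY w hw
  have hposWc : ∀ u : soC m, conj u ∈ W → (0:ℂ) ≤ inner ℂ u (T u) := by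
    intro u hu
    have hk := hKEY _ hu
    rw [conj_conj] at hk
    have e : (inner ℂ u (T u) : ℂ) = ip (T u) (conj u) := by rw [hinner, ip_symm]
    have e2 : ip (T u) (conj u) = starRingEnd ℂ (ip (T (conj u)) u) := by
      rw [← ip_conj_conj (T (conj u)) u, ← hTreal, conj_conj]
    have hzr : starRingEnd ℂ (ip (T (conj u)) u) = ip (T (conj u)) u := by
      rw [Complex.conj_eq_iff_im]
      rw [Complex.le_def] at hk
      simpa using hk.2.symm
    rw [e, e2, hzr]
    exact hk
  have hμpos : ∀ i, (0:ℂ) ≤ (μ i : ℂ) := by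
    intro i
    have h1 : (inner ℂ (b i) (S (b i)) : ℂ) = (μ i : ℂ) := by
      rw [hb i, inner_smul_right, inner_self_eq_norm_sq_to_K]
      have hn : ‖b i‖ = 1 := b.orthonormal.1 i
      rw [hn]
      norm_num
    rw [← h1]
    have h2 : (inner ℂ (b i) (S (b i)) : ℂ) = inner ℂ (P (b i)) (T (P (b i))) := by
      rw [hSapp, ← hPsym]
    rw [h2]
    exact hposW _ (hPmem _)
  have htermpos : ∀ i, (0:ℂ) ≤ (μ i : ℂ) * inner ℂ (A' (b i)) (T (A' (b i))) := by
    intro i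
    refine mul_nonneg (hμpos i) ?_
    refine hposWc _ ?_
    have hcj : conj (A' (b i)) = ad v (conj (b i)) := by
      have h := (ad_conj (conj v) (b i)).symm
      rw [conj_conj v] at h
      exact h
    rw [hcj]
    exact ⟨conj (b i), rfl⟩
  -- assemble
  rw [htrace, sub_neg_eq_add]
  have hfirst : ip (T v) (T (conj v)) = inner ℂ (T (conj v)) (T (conj v)) := by
    have hTv : T v = conj (T (conj v)) := by rw [← hTreal, conj_conj]
    rw [hTv]
    rfl
  rw [hfirst]
  have h0 : (0:ℂ) ≤ inner ℂ (T (conj v)) (T (conj v)) := by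
    rw [hinner, ip_conj_self]
    exact_mod_cast Finset.sum_nonneg fun i _ =>
      Finset.sum_nonneg fun j _ => Complex.normSq_nonneg _
  exact add_nonneg h0 (Finset.sum_nonneg fun i _ => htermpos i)

end soC

section CalcLemma

open Filter Topology

lemma nonneg_of_second_deriv {u u' : ℝ → ℝ} {b : ℝ}
    (hu : ∀ t, HasDerivAt u (u' t) t) (hu' : HasDerivAt u' b 0)
    (hnn : ∀ t, 0 ≤ u t) (h0 : u 0 = 0) : 0 ≤ b := by
  have hmin : IsLocalMin u 0 :=
    Filter.Eventually.of_forall (fun x => by rw [h0]; exact hnn x)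
  have hd0 : u' 0 = 0 := by
    have h := hmin.deriv_eq_zero
    rwa [(hu 0).deriv] at h
  have hs : Filter.Tendsto (fun t => u' t / t) (nhdsWithin 0 {(0:ℝ)}ᶜ) (nhds b) := by
    have h := hasDerivAt_iff_tendsto_slope.1 hu'
    have he : slope u' 0 = fun t => u' t / t := by
      funext t
      rw [slope_def_field, hd0, sub_zero, sub_zero]
    rwa [he] at h
  have hex : ∀ n : ℕ, ∃ c ∈ Set.Ioo (0:ℝ) (1/(n+1)),
      u' c = (u (1/(n+1)) - u 0) / (1/(n+1) - 0) := by
    intro n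
    refine exists_hasDerivAt_eq_slope u u' (by positivity)
      (fun x _ => (hu x).continuousAt.continuousWithinAt) (fun x _ => hu x)
  choose ξ hξmem hξslope using hex
  have hξpos : ∀ n, 0 < ξ n := fun n => (hξmem n).1
  have hto : Filter.Tendsto ξ atTop (nhds 0) := by
    have h1 : Filter.Tendsto (fun n : ℕ => 1/((n:ℝ)+1)) atTop (nhds 0) :=
      tendsto_one_div_add_atTop_nhds_zero_nat
    exact tendsto_of_tendsto_of_tendsto_of_le_of_le tendsto_const_nhds h1
      (fun n => (hξpos n).le) (fun n => (hξmem n).2.le)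
  have hto' : Filter.Tendsto ξ atTop (nhdsWithin 0 {(0:ℝ)}ᶜ) :=
    tendsto_nhdsWithin_of_tendsto_nhds_of_eventually_within ξ hto
      (Filter.Eventually.of_forall fun n => (hξpos n).ne')
  have hcomp : Filter.Tendsto (fun n => u' (ξ n) / ξ n) atTop (nhds b) := hs.comp hto'
  refine ge_of_tendsto hcomp (Filter.Eventually.of_forall fun n => ?_)
  have hnum : 0 ≤ u' (ξ n) := by
    rw [hξslope n, h0, sub_zero, sub_zero]
    exact div_nonneg (hnn _) (by positivity)
  exact div_nonneg hnum (hξpos n).le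

end CalcLemma

namespace soC

open NormedSpace

variable {m : ℕ}

/-- Projection of a matrix onto its skew-symmetric part, as a map into `soC m`. -/
def skewProj (m : ℕ) : Matrix (Fin m) (Fin m) ℂ →ₗ[ℂ] soC m where
  toFun A := ⟨(1/2 : ℂ) • (A - Aᵀ), by
    rw [mem_iff, transpose_smul, transpose_sub, transpose_transpose]
    rw [← smul_neg]
    congr 1
    abel⟩
  map_add' A B := by
    apply Subtype.ext
    show (1/2 : ℂ) • (A + B - (A + B)ᵀ) = (1/2 : ℂ) • (A - Aᵀ) + (1/2 : ℂ) • (B - Bᵀ)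
    rw [transpose_add, ← smul_add]
    congr 1
    abel
  map_smul' c A := by
    apply Subtype.ext
    show (1/2 : ℂ) • (c • A - (c • A)ᵀ) = c • ((1/2 : ℂ) • (A - Aᵀ))
    rw [transpose_smul, ← smul_sub, smul_comm]

lemma skewProj_coe (w : soC m) : skewProj m (w : Matrix (Fin m) (Fin m) ℂ) = w := by
  apply Subtype.ext
  show (1/2 : ℂ) • ((w : Matrix (Fin m) (Fin m) ℂ) - (w : Matrix (Fin m) (Fin m) ℂ)ᵀ) = _
  rw [w.2, sub_neg_eq_add, smul_add]
  rw [← add_smul]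
  norm_num

/-- `T` extended to all matrices. -/
def ext (T : soC m →ₗ[ℂ] soC m) : Matrix (Fin m) (Fin m) ℂ →ₗ[ℂ] Matrix (Fin m) (Fin m) ℂ :=
  (soC m).subtype ∘ₗ T ∘ₗ skewProj m

lemma ext_coe (T : soC m →ₗ[ℂ] soC m) (w : soC m) :
    ext T (w : Matrix (Fin m) (Fin m) ℂ) = ((T w : soC m) : Matrix (Fin m) (Fin m) ℂ) := by
  unfold ext
  simp [skewProj_coe]

lemma map_star_matrix_sub (A B : Matrix (Fin m) (Fin m) ℂ) :
    (A - B).map (starRingEnd ℂ) = A.map (starRingEnd ℂ) - B.map (starRingEnd ℂ) := by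
  ext i j
  simp [Matrix.map_apply, Matrix.sub_apply]

lemma map_star_matrix_smul_real (t : ℝ) (A : Matrix (Fin m) (Fin m) ℂ) :
    ((t • A : Matrix (Fin m) (Fin m) ℂ)).map (starRingEnd ℂ) = t • A.map (starRingEnd ℂ) := by
  ext i j
  simp [Matrix.map_apply, Matrix.smul_apply, Complex.real_smul, _root_.map_mul, Complex.conj_ofReal]

lemma map_star_matrix_mul (A B : Matrix (Fin m) (Fin m) ℂ) :
    (A * B).map (starRingEnd ℂ) = A.map (starRingEnd ℂ) * B.map (starRingEnd ℂ) := by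
  ext i j
  simp [Matrix.mul_apply, Matrix.map_apply, map_sum]

lemma map_star_eq_ct (A : Matrix (Fin m) (Fin m) ℂ) :
    A.map (starRingEnd ℂ) = (Aᴴ)ᵀ := by
  ext i j
  simp [Matrix.conjTranspose_apply, Matrix.map_apply]

lemma exp_map_star (N : Matrix (Fin m) (Fin m) ℂ) :
    (exp N).map (starRingEnd ℂ) = exp (N.map (starRingEnd ℂ)) := by
  rw [map_star_eq_ct, ← Matrix.exp_conjTranspose, ← Matrix.exp_transpose, ← map_star_eq_ct]

end soC

namespace soC

open NormedSpace

variable {m : ℕ}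

set_option maxHeartbeats 1600000 in
/-- Second variation along `exp(tY)`: nonnegativity of the full second-order coefficient. -/
lemma secondvar (S : Set (soC m))
    (hS : ∀ v ∈ S, ∀ (A : Matrix (Fin m) (Fin m) ℂ) (hA : Aᵀ * A = 1), A.det = 1 →
      soAct A hA v ∈ S)
    (T : soC m →ₗ[ℂ] soC m)
    (hRpos : ∀ ω ∈ S, 0 ≤ ip (T ω) (conj ω))
    (v : soC m) (hv : v ∈ S)
    (hRv : ip (T v) (conj v) = 0) (Y : soC m) :
    0 ≤ (ip (T (ad Y (ad Y v))) (conj v) + 2 * ip (T (ad Y v)) (conj (ad Y v))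
      + ip (T v) (conj (ad Y (ad Y v)))).re := by
  letI : SeminormedRing (Matrix (Fin m) (Fin m) ℂ) := Matrix.linftyOpSemiNormedRing
  letI : NormedRing (Matrix (Fin m) (Fin m) ℂ) := Matrix.linftyOpNormedRing
  letI : NormedAlgebra ℝ (Matrix (Fin m) (Fin m) ℂ) := Matrix.linftyOpNormedAlgebra
  set M : Matrix (Fin m) (Fin m) ℂ := (Y : Matrix (Fin m) (Fin m) ℂ) with hM
  set V : Matrix (Fin m) (Fin m) ℂ := (v : Matrix (Fin m) (Fin m) ℂ) with hV
  set Mc : Matrix (Fin m) (Fin m) ℂ := M.map (starRingEnd ℂ) with hMc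
  set Vc : Matrix (Fin m) (Fin m) ℂ := V.map (starRingEnd ℂ) with hVc
  set E : ℝ → Matrix (Fin m) (Fin m) ℂ := fun t => exp (t • M) with hE
  set E₂ : ℝ → Matrix (Fin m) (Fin m) ℂ := fun t => exp (t • (-M)) with hE₂
  set Ec : ℝ → Matrix (Fin m) (Fin m) ℂ := fun t => exp (t • Mc) with hEc
  set Ec₂ : ℝ → Matrix (Fin m) (Fin m) ℂ := fun t => exp (t • (-Mc)) with hEc₂
  -- basic exp facts
  have hinv1 : ∀ t, E t * E₂ t = 1 := by
    intro t
    rw [hE, hE₂, ← Matrix.exp_add_of_commute _ _ (by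
      simpa using ((Commute.refl M).neg_right.smul_left t).smul_right t)]
    simp
  have hinv2 : ∀ t, E₂ t * E t = 1 := by
    intro t
    rw [hE, hE₂, ← Matrix.exp_add_of_commute _ _ (by
      simpa using ((Commute.refl M).neg_left.smul_left t).smul_right t)]
    simp
  have htrans : ∀ t, (E t)ᵀ = E₂ t := by
    intro t
    rw [hE, hE₂, ← Matrix.exp_transpose]
    congr 1
    rw [Matrix.transpose_smul, Y.2, smul_neg]
  have horth : ∀ t, (E t)ᵀ * E t = 1 := by
    intro t
    rw [htrans t]
    exact hinv2 t
  have hEhalf : ∀ t, E (t/2) * E (t/2) = E t := by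
    intro t
    rw [hE, ← Matrix.exp_add_of_commute _ _ (Commute.refl _)]
    congr 1
    rw [← add_smul]
    norm_num
  have hdet : ∀ t, (E t).det = 1 := by
    intro t
    have h2 : (E (t/2)).det * (E (t/2)).det = 1 := by
      have h := congrArg Matrix.det (horth (t/2))
      rwa [Matrix.det_mul, Matrix.det_transpose, Matrix.det_one] at h
    rw [← hEhalf t, Matrix.det_mul, h2]
  have hEinv : ∀ t, (E t)⁻¹ = E₂ t := fun t => Matrix.inv_eq_left_inv (hinv2 t)
  -- the curve in S
  set ω : ℝ → soC m := fun t => soAct (E t) (horth t) v with hω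
  have hωS : ∀ t, ω t ∈ S := fun t => hS v hv (E t) (horth t) (hdet t)
  have hωval : ∀ t, (ω t : Matrix (Fin m) (Fin m) ℂ) = E t * V * E₂ t := by
    intro t
    show E t * V * (E t)⁻¹ = E t * V * E₂ t
    rw [hEinv t]
  have hconjE : ∀ t, (E t).map (starRingEnd ℂ) = Ec t := by
    intro t
    show (exp (t • M)).map (starRingEnd ℂ) = exp (t • Mc)
    rw [exp_map_star, map_star_matrix_smul_real, ← hMc]
  have hconjE₂ : ∀ t, (E₂ t).map (starRingEnd ℂ) = Ec₂ t := by
    intro t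
    show (exp (t • (-M))).map (starRingEnd ℂ) = exp (t • (-Mc))
    rw [exp_map_star, map_star_matrix_smul_real]
    congr 1
  have hωconj : ∀ t, ((conj (ω t)) : Matrix (Fin m) (Fin m) ℂ) = Ec t * Vc * Ec₂ t := by
    intro t
    rw [conj_val, hωval t, map_star_matrix_mul, map_star_matrix_mul, hconjE, hconjE₂]
  -- matrix-valued curves
  set g : ℝ → Matrix (Fin m) (Fin m) ℂ := fun t => E t * V * E₂ t with hg
  set gc : ℝ → Matrix (Fin m) (Fin m) ℂ := fun t => Ec t * Vc * Ec₂ t with hgc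
  have hg0 : g 0 = V := by
    rw [hg]
    show E 0 * V * E₂ 0 = V
    rw [hE, hE₂]
    simp
  have hgc0 : gc 0 = Vc := by
    rw [hgc]
    show Ec 0 * Vc * Ec₂ 0 = Vc
    rw [hEc, hEc₂]
    simp
  -- derivatives of the curves
  have hcommE₂ : ∀ t, E₂ t * M = M * E₂ t := by
    intro t
    have hc : Commute (t • (-M)) M := by
      simpa using ((Commute.refl M).neg_left.smul_left t)
    exact hc.exp_left.eq
  have hcommEc₂ : ∀ t, Ec₂ t * Mc = Mc * Ec₂ t := by
    intro t
    have hc : Commute (t • (-Mc)) Mc := by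
      simpa using ((Commute.refl Mc).neg_left.smul_left t)
    exact hc.exp_left.eq
  have hg' : ∀ t, HasDerivAt g (M * g t - g t * M) t := by
    intro t
    have h1 : HasDerivAt E (M * E t) t := hasDerivAt_exp_smul_const' M t
    have h2 : HasDerivAt E₂ ((-M) * E₂ t) t := hasDerivAt_exp_smul_const' (-M) t
    have h3 := (h1.mul_const V).mul h2
    refine h3.congr_deriv ?_
    symm
    rw [hg]
    show M * (E t * V * E₂ t) - (E t * V * E₂ t) * M = M * E t * V * E₂ t + E t * V * (-M * E₂ t)
    rw [neg_mul, mul_neg, ← hcommE₂ t]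
    rw [← mul_assoc, ← mul_assoc, ← mul_assoc]
    abel
  have hgc' : ∀ t, HasDerivAt gc (Mc * gc t - gc t * Mc) t := by
    intro t
    have h1 : HasDerivAt Ec (Mc * Ec t) t := hasDerivAt_exp_smul_const' Mc t
    have h2 : HasDerivAt Ec₂ ((-Mc) * Ec₂ t) t := hasDerivAt_exp_smul_const' (-Mc) t
    have h3 := (h1.mul_const Vc).mul h2
    refine h3.congr_deriv ?_
    symm
    rw [hgc]
    show Mc * (Ec t * Vc * Ec₂ t) - (Ec t * Vc * Ec₂ t) * Mc
      = Mc * Ec t * Vc * Ec₂ t + Ec t * Vc * (-Mc * Ec₂ t)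
    rw [neg_mul, mul_neg, ← hcommEc₂ t]
    rw [← mul_assoc, ← mul_assoc, ← mul_assoc]
    abel
  -- helpers for linear maps
  have hlinD : ∀ (L : Matrix (Fin m) (Fin m) ℂ →ₗ[ℂ] Matrix (Fin m) (Fin m) ℂ)
      (u : ℝ → Matrix (Fin m) (Fin m) ℂ) (u' : Matrix (Fin m) (Fin m) ℂ) (t : ℝ),
      HasDerivAt u u' t → HasDerivAt (fun s => L (u s)) (L u') t := by
    intro L u u' t hu
    exact ((L.restrictScalars ℝ).toContinuousLinearMap.hasFDerivAt.comp_hasDerivAt t hu :)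
  have htrD : ∀ (u : ℝ → Matrix (Fin m) (Fin m) ℂ) (u' : Matrix (Fin m) (Fin m) ℂ) (t : ℝ),
      HasDerivAt u u' t → HasDerivAt (fun s => Matrix.trace (u s)) (Matrix.trace u') t := by
    intro u u' t hu
    exact ((((Matrix.traceLinearMap (Fin m) ℂ ℂ)).restrictScalars
      ℝ).toContinuousLinearMap.hasFDerivAt.comp_hasDerivAt t hu :)
  have hreD : ∀ (u : ℝ → ℂ) (u' : ℂ) (t : ℝ),
      HasDerivAt u u' t → HasDerivAt (fun s => (u s).re) u'.re t := by
    intro u u' t hu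
    exact (Complex.reCLM.hasFDerivAt.comp_hasDerivAt t hu :)
  set Th := ext T with hTh
  -- first-level function and derivative
  set F : ℝ → ℂ := fun t => -(Matrix.trace (Th (g t) * gc t)) with hF
  set F1 : ℝ → ℂ := fun t =>
    -(Matrix.trace (Th (M * g t - g t * M) * gc t + Th (g t) * (Mc * gc t - gc t * Mc))) with hF1
  have hF' : ∀ t, HasDerivAt F (F1 t) t := by
    intro t
    have hmul : HasDerivAt (fun s => Th (g s) * gc s)
        (Th (M * g t - g t * M) * gc t + Th (g t) * (Mc * gc t - gc t * Mc)) t :=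
      (hlinD Th g _ t (hg' t)).mul (hgc' t)
    exact (htrD _ _ t hmul).neg
  -- second-level derivative at 0
  set z1 : Matrix (Fin m) (Fin m) ℂ := M * V - V * M with hz1
  set z1c : Matrix (Fin m) (Fin m) ℂ := Mc * Vc - Vc * Mc with hz1c
  set z2 : Matrix (Fin m) (Fin m) ℂ := M * z1 - z1 * M with hz2
  set z2c : Matrix (Fin m) (Fin m) ℂ := Mc * z1c - z1c * Mc with hz2c
  set c2m : ℂ := -(Matrix.trace ((Th z2 * Vc + Th z1 * z1c) + (Th z1 * z1c + Th V * z2c)))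
    with hc2m
  have hg'0 : HasDerivAt g z1 0 := by
    have := hg' 0
    rwa [hg0] at this
  have hgc'0 : HasDerivAt gc z1c 0 := by
    have := hgc' 0
    rwa [hgc0] at this
  have hF1' : HasDerivAt F1 c2m 0 := by
    have hu1 : HasDerivAt (fun s => M * g s - g s * M) z2 0 := by
      have h := (hg'0.const_mul M).sub (hg'0.mul_const M)
      exact h
    have hu2 : HasDerivAt (fun s => Mc * gc s - gc s * Mc) z2c 0 := by
      have h := (hgc'0.const_mul Mc).sub (hgc'0.mul_const Mc)
      exact h
    have p1 : HasDerivAt (fun s => Th (M * g s - g s * M) * gc s)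
        (Th z2 * Vc + Th z1 * z1c) 0 := by
      have h := (hlinD Th _ z2 0 hu1).mul hgc'0
      rw [hg0, hgc0] at h
      exact h
    have p2 : HasDerivAt (fun s => Th (g s) * (Mc * gc s - gc s * Mc))
        (Th z1 * z1c + Th V * z2c) 0 := by
      have h := (hlinD Th g z1 0 hg'0).mul hu2
      rw [hg0, hgc0] at h
      exact h
    exact (htrD _ _ 0 (p1.add p2)).neg
  -- relating F to the invariant quantity
  have hωg : ∀ t, (ω t : Matrix (Fin m) (Fin m) ℂ) = g t := by
    intro t
    rw [hωval t]
  have hωgc : ∀ t, ((conj (ω t)) : Matrix (Fin m) (Fin m) ℂ) = gc t := by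
    intro t
    rw [hωconj t]
  have hfF : ∀ t, F t = ip (T (ω t)) (conj (ω t)) := by
    intro t
    have h1 : Th (g t) = ((T (ω t) : soC m) : Matrix (Fin m) (Fin m) ℂ) := by
      rw [hTh, ← hωg t, ext_coe]
    have h2 : gc t = ((conj (ω t) : soC m) : Matrix (Fin m) (Fin m) ℂ) := (hωgc t).symm
    rw [hF]
    show -(Matrix.trace (Th (g t) * gc t)) = _
    rw [h1, h2]
    rfl
  have hω0 : ω 0 = v := by
    apply Subtype.ext
    rw [hωg 0, hg0]
  have hnn : ∀ t, 0 ≤ (F t).re := by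
    intro t
    have h := hRpos (ω t) (hωS t)
    rw [Complex.le_def] at h
    rw [hfF t]
    simpa using h.1
  have h00 : (F 0).re = 0 := by
    rw [hfF 0, hω0, hRv]
    simp
  have hkey : 0 ≤ c2m.re := by
    refine nonneg_of_second_deriv (u := fun t => (F t).re) (u' := fun t => (F1 t).re)
      (fun t => hreD _ _ t (hF' t)) (hreD _ _ 0 hF1') hnn h00
  -- identify c2m with the statement
  have e1 : ip (T (ad Y (ad Y v))) (conj v) = -(Matrix.trace (Th z2 * Vc)) := by
    unfold ip
    rw [hTh, show ((T (ad Y (ad Y v)) : soC m) : Matrix (Fin m) (Fin m) ℂ)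
        = ext T ((ad Y (ad Y v) : soC m) : Matrix (Fin m) (Fin m) ℂ) from (ext_coe T _).symm]
    rfl
  have e2 : ip (T (ad Y v)) (conj (ad Y v)) = -(Matrix.trace (Th z1 * z1c)) := by
    unfold ip
    rw [hTh, show ((T (ad Y v) : soC m) : Matrix (Fin m) (Fin m) ℂ)
        = ext T ((ad Y v : soC m) : Matrix (Fin m) (Fin m) ℂ) from (ext_coe T _).symm]
    have hc : ((conj (ad Y v) : soC m) : Matrix (Fin m) (Fin m) ℂ) = z1c := by
      rw [conj_val]
      show (M * V - V * M).map (starRingEnd ℂ) = Mc * Vc - Vc * Mc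
      simp only [map_star_matrix_sub, map_star_matrix_mul]
      rfl
    rw [hc]
    rfl
  have e3 : ip (T v) (conj (ad Y (ad Y v))) = -(Matrix.trace (Th V * z2c)) := by
    unfold ip
    rw [hTh, show ((T v : soC m) : Matrix (Fin m) (Fin m) ℂ)
        = ext T ((v : soC m) : Matrix (Fin m) (Fin m) ℂ) from (ext_coe T _).symm]
    have hc : ((conj (ad Y (ad Y v)) : soC m) : Matrix (Fin m) (Fin m) ℂ) = z2c := by
      rw [conj_val]
      show (M * (M * V - V * M) - (M * V - V * M) * M).map (starRingEnd ℂ)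
        = Mc * (Mc * Vc - Vc * Mc) - (Mc * Vc - Vc * Mc) * Mc
      simp only [map_star_matrix_sub, map_star_matrix_mul]
      rfl
    rw [hc]
  have hceq : ip (T (ad Y (ad Y v))) (conj v) + 2 * ip (T (ad Y v)) (conj (ad Y v))
      + ip (T v) (conj (ad Y (ad Y v))) = c2m := by
    rw [e1, e2, e3, hc2m, Matrix.trace_add, Matrix.trace_add, Matrix.trace_add]
    ring
  rw [hceq]
  exact hkey

end soC

namespace soC

variable {m : ℕ}

lemma ad_smul (c : ℂ) (Y w : soC m) : ad (c • Y) w = c • ad Y w := by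
  apply Subtype.ext
  show ((c • Y : soC m) : Matrix (Fin m) (Fin m) ℂ) * (w : Matrix (Fin m) (Fin m) ℂ)
      - (w : Matrix (Fin m) (Fin m) ℂ) * ((c • Y : soC m) : Matrix (Fin m) (Fin m) ℂ)
    = c • ((Y : Matrix (Fin m) (Fin m) ℂ) * (w : Matrix (Fin m) (Fin m) ℂ)
      - (w : Matrix (Fin m) (Fin m) ℂ) * (Y : Matrix (Fin m) (Fin m) ℂ))
  rw [Submodule.coe_smul, Matrix.smul_mul, Matrix.mul_smul, smul_sub]

lemma star_ip_T (T : soC m →ₗ[ℂ] soC m)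
    (hTreal : ∀ X, T (conj X) = conj (T X))
    (hTsa : ∀ X Y, ip (T X) Y = ip X (T Y)) (x y : soC m) :
    starRingEnd ℂ (ip (T x) (conj y)) = ip (T y) (conj x) := by
  rw [← ip_conj_conj, conj_conj, ← hTreal, hTsa, ip_symm]

lemma psdW (S : Set (soC m))
    (hS : ∀ v ∈ S, ∀ (A : Matrix (Fin m) (Fin m) ℂ) (hA : Aᵀ * A = 1), A.det = 1 →
      soAct A hA v ∈ S)
    (T : soC m →ₗ[ℂ] soC m)
    (hTreal : ∀ X, T (conj X) = conj (T X))
    (hTsa : ∀ X Y, ip (T X) Y = ip X (T Y))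
    (hRpos : ∀ ω ∈ S, 0 ≤ ip (T ω) (conj ω))
    (v : soC m) (hv : v ∈ S) (hRv : ip (T v) (conj v) = 0) :
    ∀ w : soC m, w ∈ LinearMap.range (ad v) → 0 ≤ ip (T w) (conj w) := by
  have main : ∀ X : soC m, 0 ≤ ip (T (ad X v)) (conj (ad X v)) := by
    intro X
    have h1 := secondvar S hS T hRpos v hv hRv X
    have h2 := secondvar S hS T hRpos v hv hRv (Complex.I • X)
    set q1 : ℂ := ip (T (ad X (ad X v))) (conj v) with hq1
    set qB : ℂ := ip (T (ad X v)) (conj (ad X v)) with hqB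
    set q3 : ℂ := ip (T v) (conj (ad X (ad X v))) with hq3
    have e1 : ad (Complex.I • X) v = Complex.I • ad X v := ad_smul _ _ _
    have e2 : ad (Complex.I • X) (ad (Complex.I • X) v) = (-1 : ℂ) • ad X (ad X v) := by
      rw [e1, _root_.map_smul, ad_smul, smul_smul, Complex.I_mul_I]
    have hA2 : ip (T (ad (Complex.I • X) (ad (Complex.I • X) v))) (conj v) = -q1 := by
      rw [e2, _root_.map_smul, ip_smul_left, hq1]
      ring
    have hB2 : ip (T (ad (Complex.I • X) v)) (conj (ad (Complex.I • X) v)) = qB := by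
      rw [e1, _root_.map_smul, conj_smul, ip_smul_left, ip_smul_right, Complex.conj_I, hqB]
      have : Complex.I * (-Complex.I * qB) = (-(Complex.I * Complex.I)) * qB := by ring
      rw [this, Complex.I_mul_I]
      ring
    have hC2 : ip (T v) (conj (ad (Complex.I • X) (ad (Complex.I • X) v))) = -q3 := by
      rw [e2, conj_smul, ip_smul_right, hq3]
      simp
    rw [hA2, hB2, hC2] at h2
    have hre : 0 ≤ qB.re := by
      have hsum := add_nonneg h1 h2
      have : (q1 + 2 * qB + q3).re + (-q1 + 2 * qB + -q3).re = 4 * qB.re := by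
        simp [Complex.add_re, Complex.neg_re, Complex.mul_re]
        ring
      rw [this] at hsum
      linarith
    have him : qB.im = 0 := by
      have h := star_ip_T T hTreal hTsa (ad X v) (ad X v)
      rw [← hqB] at h
      exact Complex.conj_eq_iff_im.1 h
    rw [Complex.le_def]
    constructor
    · simpa using hre
    · simpa using him.symm
  intro w hw
  obtain ⟨X, rfl⟩ := hw
  have hswap : ad v X = (-1 : ℂ) • ad X v := by
    apply Subtype.ext
    show (v : Matrix (Fin m) (Fin m) ℂ) * (X : Matrix (Fin m) (Fin m) ℂ)
        - (X : Matrix (Fin m) (Fin m) ℂ) * (v : Matrix (Fin m) (Fin m) ℂ)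
      = (-1 : ℂ) • ((X : Matrix (Fin m) (Fin m) ℂ) * (v : Matrix (Fin m) (Fin m) ℂ)
        - (v : Matrix (Fin m) (Fin m) ℂ) * (X : Matrix (Fin m) (Fin m) ℂ))
    rw [neg_one_smul]
    abel
  rw [hswap, _root_.map_smul, conj_smul, ip_smul_left, ip_smul_right]
  have hc : starRingEnd ℂ (-1 : ℂ) = -1 := by simp
  rw [hc]
  have : (-1 : ℂ) * (-1 * ip (T (ad X v)) (conj (ad X v))) = ip (T (ad X v)) (conj (ad X v)) := by
    ring
  rw [this]
  exact main X

end soC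

/-- **Wilking's theorem, special case** (Theorem B.1 of the paper): if the symmetric bilinear
form `R X Y := ⟨T X, Y⟩` (the complex-bilinear extension of a form on `so(m,ℝ)`, `T` being the
associated self-adjoint operator) satisfies `R(ω,ω̄) ≥ 0` on an `SO(m,ℂ)`-Ad-invariant subset
`S ⊆ so(m,ℂ)`, and `v ∈ S` is nonzero with `R(v,v̄) = 0`, then `(R² + R#)(v,v̄) ≥ 0`, where
`R²(X,Y) = ⟨T X, T Y⟩` and `R#(X,Y) = -tr(ad_X ∘ T ∘ ad_Y ∘ T)`. -/
theorem wilking_special_case_Q_nonneg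
    (m : ℕ) (hm : 2 ≤ m) (S : Set (soC m))
    (hS : ∀ v ∈ S, ∀ (A : Matrix (Fin m) (Fin m) ℂ) (hA : Aᵀ * A = 1), A.det = 1 →
      soC.soAct A hA v ∈ S)
    (T : soC m →ₗ[ℂ] soC m)
    (hTreal : ∀ X, T (soC.conj X) = soC.conj (T X))
    (hTsa : ∀ X Y, soC.ip (T X) Y = soC.ip X (T Y))
    (hRpos : ∀ ω ∈ S, 0 ≤ soC.ip (T ω) (soC.conj ω))
    (v : soC m) (hv : v ∈ S) (hv0 : v ≠ 0)
    (hRv : soC.ip (T v) (soC.conj v) = 0) :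
    0 ≤ soC.ip (T v) (T (soC.conj v))
      - LinearMap.trace ℂ ↥(soC m) (soC.ad v ∘ₗ T ∘ₗ soC.ad (soC.conj v) ∘ₗ T) := by
  exact soC.algebraic_part T hTreal hTsa v (soC.psdW S hS T hTreal hTsa hRpos v hv hRv)

end
end

section
/- Let m ≥ 2 and let S be a subset of so(m,ℂ) invariant under the adjoint action of SO(m,ℂ). Let R be a symmetric bilinear form on so(m,ℝ), extended complex-bilinearly to so(m,ℂ). Suppose R(ω, ω̄) ≥ 0 for every ω ∈ S, and v ∈ S satisfies R(v, v̄) = 0. Then for every x ∈ so(m,ℂ), R([x,v], [x̄,v̄]) ≥ 0; that is, R is nonnegative on the image of ad_v in the Hermitian sense. -/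
/-!
Statement 2: inequality (B.5) ('mainstep') in the proof of Wilking's theorem:
R is nonnegative on the image of ad_v in the Hermitian sense.
-/

noncomputable section

open Matrix ComplexOrder

noncomputable section

namespace WilkingAux

open Matrix ComplexOrder

variable {m : ℕ}

abbrev Mx (m : ℕ) := Matrix (Fin m) (Fin m) ℂ

/-- entrywise conjugation -/
def cm (M : Mx m) : Mx m := M.map (starRingEnd ℂ)

lemma cm_add (M N : Mx m) : cm (M + N) = cm M + cm N := by
  ext i j; simp [cm]

lemma cm_mul (M N : Mx m) : cm (M * N) = cm M * cm N := by
  ext i j; simp [cm, Matrix.mul_apply]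

lemma cm_smul (c : ℂ) (M : Mx m) : cm (c • M) = (starRingEnd ℂ c) • cm M := by
  ext i j; simp [cm]

lemma cm_neg (M : Mx m) : cm (-M) = -cm M := by
  ext i j; simp [cm]

lemma cm_sub (M N : Mx m) : cm (M - N) = cm M - cm N := by
  ext i j; simp [cm]

/-- projection to the skew-symmetric part, as a linear map to `soC m`. -/
def skewL (m : ℕ) : Mx m →ₗ[ℂ] soC m where
  toFun M := ⟨(2:ℂ)⁻¹ • (M - Mᵀ), by
    rw [soC.mem_iff, transpose_smul, transpose_sub, transpose_transpose, ← smul_neg, neg_sub]⟩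
  map_add' M N := by
    apply Subtype.ext
    show (2:ℂ)⁻¹ • ((M + N) - (M + N)ᵀ) = (2:ℂ)⁻¹ • (M - Mᵀ) + (2:ℂ)⁻¹ • (N - Nᵀ)
    rw [transpose_add, ← smul_add]
    ring_nf
    module
  map_smul' c M := by
    apply Subtype.ext
    show (2:ℂ)⁻¹ • ((c • M) - (c • M)ᵀ) = c • ((2:ℂ)⁻¹ • (M - Mᵀ))
    rw [transpose_smul, ← smul_sub, smul_smul, smul_smul, mul_comm]

lemma skewL_coe (w : soC m) : skewL m (w : Mx m) = w := by
  apply Subtype.ext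
  show (2:ℂ)⁻¹ • ((w : Mx m) - (w : Mx m)ᵀ) = (w : Mx m)
  rw [w.2, sub_neg_eq_add, ← two_smul ℂ, smul_smul, inv_mul_cancel₀ two_ne_zero, one_smul]

/-- `R` transported to a bilinear form on the full matrix space. -/
def RB (R : soC m →ₗ[ℂ] soC m →ₗ[ℂ] ℂ) : Mx m →ₗ[ℂ] Mx m →ₗ[ℂ] ℂ :=
  R.compl₁₂ (skewL m) (skewL m)

lemma RB_apply (R : soC m →ₗ[ℂ] soC m →ₗ[ℂ] ℂ) (M N : Mx m) :
    RB R M N = R (skewL m M) (skewL m N) := rfl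

lemma RB_coe (R : soC m →ₗ[ℂ] soC m →ₗ[ℂ] ℂ) (w u : soC m) :
    RB R (w : Mx m) (u : Mx m) = R w u := by
  rw [RB_apply, skewL_coe, skewL_coe]

lemma RB_cont2 (R : soC m →ₗ[ℂ] soC m →ₗ[ℂ] ℂ) :
    Continuous (fun p : Mx m × Mx m => RB R p.1 p.2) := by
  have h : (fun p : Mx m × Mx m => RB R p.1 p.2)
      = fun p => ∑ k : Fin m, ∑ l : Fin m,
          p.2 k l * ((RB R).flip (Matrix.single k l 1) p.1) := by
    funext p
    conv_lhs => rw [Matrix.matrix_eq_sum_single p.2]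
    rw [map_sum]
    refine Finset.sum_congr rfl fun k _ => ?_
    rw [map_sum]
    refine Finset.sum_congr rfl fun l _ => ?_
    have hsb : Matrix.single k l (p.2 k l) = p.2 k l • Matrix.single k l 1 := by
      rw [Matrix.smul_single, smul_eq_mul, mul_one]
    rw [hsb, _root_.map_smul]
    simp [LinearMap.flip_apply, smul_eq_mul]
  rw [h]
  refine continuous_finset_sum _ fun k _ => continuous_finset_sum _ fun l _ => ?_
  exact ((continuous_snd.matrix_elem k l).mul
    (((RB R).flip (Matrix.single k l 1)).continuous_of_finiteDimensional.comp continuous_fst))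

/-! ### Continuity -/

/-! ### The Cayley curve and its expansion -/

/-- resolvent `(1 - s X)⁻¹` -/
def NN (X : Mx m) (s : ℝ) : Mx m := (1 - (s:ℂ) • X)⁻¹

/-- Cayley transform `(1 + sX)(1-sX)⁻¹` -/
def AC (X : Mx m) (s : ℝ) : Mx m := (1 + (s:ℂ) • X) * NN X s

/-- second order coefficient of `AC` -/
def CC (X : Mx m) (s : ℝ) : Mx m := X^2 * NN X s + X^2 + (s:ℂ) • (X^3 * NN X s)

/-- second order coefficient of the conjugated orbit curve -/
def GG (X V : Mx m) (s : ℝ) : Mx m :=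
  CC X s * V + V * CC X (-s) - (4:ℂ) • (X*(V*X))
  + (2*(s:ℂ)) • (X*(V*CC X (-s)) - CC X s * (V*X))
  + ((s:ℂ)^2) • (CC X s * (V * CC X (-s)))

/-- good parameters -/
def PP (X : Mx m) (s : ℝ) : Prop :=
  ((1:Mx m) - (s:ℂ) • X).det ≠ 0 ∧ ((1:Mx m) + (s:ℂ) • X).det ≠ 0

lemma PP.neg {X : Mx m} {s : ℝ} (h : PP X s) : PP X (-s) := by
  obtain ⟨h1, h2⟩ := h
  constructor <;> push_cast <;>
    simp only [neg_smul, sub_neg_eq_add, ← sub_eq_add_neg] <;> assumption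

lemma NN_neg (X : Mx m) (s : ℝ) : NN X (-s) = ((1:Mx m) + (s:ℂ) • X)⁻¹ := by
  unfold NN; push_cast; rw [neg_smul, sub_neg_eq_add]

section withP

variable {X V : Mx m} {s : ℝ}

lemma PP.isUnit1 (h : PP X s) : IsUnit ((1:Mx m) - (s:ℂ) • X).det :=
  isUnit_iff_ne_zero.2 h.1

lemma PP.isUnit2 (h : PP X s) : IsUnit ((1:Mx m) + (s:ℂ) • X).det :=
  isUnit_iff_ne_zero.2 h.2

lemma PP.mulN (h : PP X s) : ((1:Mx m) - (s:ℂ) • X) * NN X s = 1 :=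
  Matrix.mul_nonsing_inv _ h.isUnit1

lemma PP.Nmul (h : PP X s) : NN X s * ((1:Mx m) - (s:ℂ) • X) = 1 :=
  Matrix.nonsing_inv_mul _ h.isUnit1

lemma PP.Nid (h : PP X s) : NN X s = 1 + (s:ℂ) • (X * NN X s) := by
  have h1 := h.mulN
  rw [sub_mul, one_mul, smul_mul_assoc] at h1
  exact sub_eq_iff_eq_add.mp h1

lemma PP.Nid1 (h : PP X s) : X * NN X s = X + (s:ℂ) • (X^2 * NN X s) := by
  conv_lhs => rw [h.Nid]
  rw [mul_add, mul_one, mul_smul_comm, ← mul_assoc, ← pow_two]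

lemma PP.Nid2 (h : PP X s) : X^2 * NN X s = X^2 + (s:ℂ) • (X^3 * NN X s) := by
  conv_lhs => rw [h.Nid]
  rw [mul_add, mul_one, mul_smul_comm, ← mul_assoc, ← pow_succ]

lemma PP.AC_expand (h : PP X s) :
    AC X s = 1 + (2*(s:ℂ)) • X + ((s:ℂ)^2) • CC X s := by
  have cancel : ∀ A B : Mx m, A * (1 - (s:ℂ) • X) = B * (1 - (s:ℂ) • X) → A = B := by
    intro A B hAB
    calc A = A * ((1 - (s:ℂ) • X) * NN X s) := by rw [h.mulN, mul_one]
      _ = (A * (1 - (s:ℂ) • X)) * NN X s := by rw [mul_assoc]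
      _ = (B * (1 - (s:ℂ) • X)) * NN X s := by rw [hAB]
      _ = B * ((1 - (s:ℂ) • X) * NN X s) := by rw [mul_assoc]
      _ = B := by rw [h.mulN, mul_one]
  apply cancel
  unfold AC CC
  rw [mul_assoc, h.Nmul, mul_one]
  simp only [add_mul, smul_mul_assoc, mul_assoc, h.Nmul, mul_one]
  simp only [mul_sub, mul_add, mul_one, mul_smul_comm, one_mul, smul_sub, smul_add,
    smul_smul, pow_succ, pow_zero]
  match_scalars <;> ring

lemma PP.AC_mul_neg (h : PP X s) : AC X s * AC X (-s) = 1 := by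
  unfold AC
  rw [NN_neg]
  have : ((1:Mx m) + ((-s:ℝ):ℂ) • X) = 1 - (s:ℂ) • X := by push_cast; rw [neg_smul, ← sub_eq_add_neg]
  rw [this]
  calc (1 + (s:ℂ) • X) * NN X s * ((1 - (s:ℂ) • X) * ((1:Mx m) + (s:ℂ) • X)⁻¹)
      = (1 + (s:ℂ) • X) * (NN X s * (1 - (s:ℂ) • X)) * ((1:Mx m) + (s:ℂ) • X)⁻¹ := by
        simp only [mul_assoc]
    _ = 1 := by rw [h.Nmul, mul_one, Matrix.mul_nonsing_inv _ h.isUnit2]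

lemma PP.AC_inv (h : PP X s) : (AC X s)⁻¹ = AC X (-s) :=
  Matrix.inv_eq_right_inv h.AC_mul_neg

lemma PP.AC_orth (h : PP X s) (hX : Xᵀ = -X) : (AC X s)ᵀ * AC X s = 1 := by
  have ht1 : ((1:Mx m) + (s:ℂ) • X)ᵀ = 1 - (s:ℂ) • X := by
    rw [transpose_add, transpose_smul, transpose_one, hX, smul_neg, ← sub_eq_add_neg]
  have ht2 : ((1:Mx m) - (s:ℂ) • X)ᵀ = 1 + (s:ℂ) • X := by
    rw [transpose_sub, transpose_smul, transpose_one, hX, smul_neg, sub_neg_eq_add]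
  have hcomm : ((1:Mx m) - (s:ℂ) • X) * (1 + (s:ℂ) • X)
      = ((1:Mx m) + (s:ℂ) • X) * (1 - (s:ℂ) • X) := by
    simp only [mul_add, add_mul, sub_mul, mul_sub, one_mul, mul_one, smul_mul_assoc,
      mul_smul_comm, smul_smul]
    module
  have hT : (AC X s)ᵀ = ((1:Mx m) + (s:ℂ) • X)⁻¹ * (1 - (s:ℂ) • X) := by
    unfold AC NN
    rw [transpose_mul, Matrix.transpose_nonsing_inv, ht1, ht2]
  rw [hT]
  unfold AC
  calc ((1:Mx m) + (s:ℂ) • X)⁻¹ * (1 - (s:ℂ) • X) * ((1 + (s:ℂ) • X) * NN X s)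
      = ((1:Mx m) + (s:ℂ) • X)⁻¹ * (((1 - (s:ℂ) • X) * (1 + (s:ℂ) • X)) * NN X s) := by
        simp only [mul_assoc]
    _ = ((1:Mx m) + (s:ℂ) • X)⁻¹ * ((1 + (s:ℂ) • X) * ((1 - (s:ℂ) • X) * NN X s)) := by
        rw [hcomm, mul_assoc]
    _ = 1 := by rw [h.mulN, mul_one, Matrix.nonsing_inv_mul _ h.isUnit2]

lemma PP.AC_det (h : PP X s) (hX : Xᵀ = -X) : (AC X s).det = 1 := by
  have ht1 : ((1:Mx m) + (s:ℂ) • X)ᵀ = 1 - (s:ℂ) • X := by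
    rw [transpose_add, transpose_smul, transpose_one, hX, smul_neg, ← sub_eq_add_neg]
  have hd : ((1:Mx m) + (s:ℂ) • X).det = ((1:Mx m) - (s:ℂ) • X).det := by
    rw [← Matrix.det_transpose, ht1]
  unfold AC NN
  rw [Matrix.det_mul, Matrix.det_nonsing_inv, Ring.inverse_eq_inv, hd,
    mul_inv_cancel₀ h.1]

lemma PP.W_expand (h : PP X s) :
    AC X s * V * AC X (-s)
      = V + (2*(s:ℂ)) • (X*V - V*X) + ((s:ℂ)^2) • GG X V s := by
  have hn := h.neg
  have e1 := h.AC_expand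
  have e2 := hn.AC_expand
  push_cast at e2
  rw [e1, e2]
  unfold GG
  simp only [mul_add, add_mul, mul_sub, sub_mul, one_mul, mul_one, smul_mul_assoc,
    mul_smul_comm, smul_smul, smul_add, smul_sub, mul_assoc]
  match_scalars <;> ring

end withP

section cont

variable (X V : Mx m)

lemma cont_lin : Continuous fun s : ℝ => (1:Mx m) - (s:ℂ) • X := by
  exact continuous_const.sub ((Complex.continuous_ofReal.smul continuous_const))

lemma det_at_zero : ((1:Mx m) - ((0:ℝ):ℂ) • X).det = 1 := by simp

lemma NN_contAt : ContinuousAt (NN X) 0 := by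
  have hfun : NN X = fun s : ℝ =>
      (((1:Mx m) - (s:ℂ) • X).det)⁻¹ • ((1:Mx m) - (s:ℂ) • X).adjugate := by
    funext s
    rw [NN, Matrix.inv_def, Ring.inverse_eq_inv]
  rw [hfun]
  have hdet : Continuous fun s : ℝ => ((1:Mx m) - (s:ℂ) • X).det := (cont_lin X).matrix_det
  have hne : ((fun s : ℝ => ((1:Mx m) - (s:ℂ) • X).det) 0) ≠ 0 := by simp
  exact (hdet.continuousAt.inv₀ hne).smul ((cont_lin X).matrix_adjugate.continuousAt)

lemma NN_zero : NN X 0 = 1 := by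
  rw [NN]; simp

lemma CC_contAt : ContinuousAt (CC X) 0 := by
  unfold CC
  exact ((continuousAt_const.mul (NN_contAt X)).add continuousAt_const).add
    ((Complex.continuous_ofReal.continuousAt.smul (continuousAt_const.mul (NN_contAt X))))

lemma CC_zero : CC X 0 = X^2 + X^2 := by
  unfold CC
  rw [NN_zero]
  simp

lemma CC_neg_contAt : ContinuousAt (fun s : ℝ => CC X (-s)) 0 := by
  have h : ContinuousAt (CC X) ((-0 : ℝ)) := by rw [neg_zero]; exact CC_contAt X
  simpa [Function.comp_def] using h.comp (continuous_neg.continuousAt (x := (0:ℝ)))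

lemma GG_contAt : ContinuousAt (GG X V) 0 := by
  unfold GG
  have h1 := CC_contAt X
  have h2 := CC_neg_contAt X
  exact ((((h1.mul continuousAt_const).add (continuousAt_const.mul h2)).sub
      continuousAt_const).add
      ((continuousAt_const.mul Complex.continuous_ofReal.continuousAt).smul
        ((continuousAt_const.mul (continuousAt_const.mul h2)).sub
          (h1.mul continuousAt_const)))).add
    (((Complex.continuous_ofReal.continuousAt.pow 2)).smul
      (h1.mul (continuousAt_const.mul h2)))

lemma GG_zero : GG X V 0 = (2:ℂ) • (X^2*V + V*X^2 - (2:ℂ) • (X*(V*X))) := by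
  unfold GG
  rw [show (-0:ℝ) = 0 by ring, CC_zero]
  push_cast
  simp only [zero_smul, mul_zero, zero_mul, smul_zero, add_zero, zero_sub, mul_one,
    ne_eq, zero_pow, OfNat.ofNat_ne_zero, not_false_eq_true]
  simp only [add_mul, mul_add]
  match_scalars <;> ring

end cont

/-! ### The second-variation inequality -/

/-- commutator `[X,V]` -/
def DD (X V : Mx m) : Mx m := X*V - V*X

/-- half the double commutator coefficient -/
def HH (X V : Mx m) : Mx m := X^2*V + V*X^2 - (2:ℂ) • (X*(V*X))

lemma GG_zero' (X V : Mx m) : GG X V 0 = (2:ℂ) • HH X V := GG_zero X V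

section RR

variable (R : soC m →ₗ[ℂ] soC m →ₗ[ℂ] ℂ)

/-- The second-order coefficient function. -/
def QQ (X V : Mx m) (s : ℝ) : ℂ :=
  4 * RB R (DD X V) (cm (DD X V)) + RB R (GG X V s) (cm V) + RB R V (cm (GG X V s))
  + (s:ℂ) * (2 * RB R (DD X V) (cm (GG X V s)) + 2 * RB R (GG X V s) (cm (DD X V)))
  + (s:ℂ)^2 * RB R (GG X V s) (cm (GG X V s))

lemma cm_cont : Continuous (cm : Mx m → Mx m) := by
  unfold cm
  exact continuous_id.matrix_map Complex.continuous_conj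

lemma RB_contAt_comp {f g : ℝ → Mx m} (hf : ContinuousAt f 0) (hg : ContinuousAt g 0) :
    ContinuousAt (fun s => RB R (f s) (g s)) 0 := by
  have h := ContinuousAt.comp (g := fun p : Mx m × Mx m => RB R p.1 p.2)
    ((RB_cont2 R).continuousAt) (hf.prodMk hg)
  simpa [Function.comp_def] using h

lemma QQ_contAt (X V : Mx m) : ContinuousAt (QQ R X V) 0 := by
  have hg := GG_contAt X V
  have hcmg : ContinuousAt (fun s => cm (GG X V s)) 0 := by
    have := (cm_cont.continuousAt (x := GG X V 0)).comp hg
    simpa [Function.comp_def] using this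
  exact ((((continuousAt_const.add (RB_contAt_comp R hg continuousAt_const)).add
      (RB_contAt_comp R continuousAt_const hcmg)).add
      ((Complex.continuous_ofReal.continuousAt).mul
        ((continuousAt_const.mul (RB_contAt_comp R continuousAt_const hcmg)).add
          (continuousAt_const.mul (RB_contAt_comp R hg continuousAt_const))))).add
      (((Complex.continuous_ofReal.continuousAt).pow 2).mul (RB_contAt_comp R hg hcmg)))

lemma QQ_zero (X V : Mx m) :
    QQ R X V 0 = 4 * RB R (DD X V) (cm (DD X V))
      + 2 * RB R (HH X V) (cm V) + 2 * RB R V (cm (HH X V)) := by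
  unfold QQ
  rw [GG_zero']
  simp only [cm_smul, map_ofNat, _root_.map_smul, LinearMap.smul_apply, smul_eq_mul,
    Complex.ofReal_zero, zero_mul, mul_zero, add_zero, ne_eq, OfNat.ofNat_ne_zero,
    not_false_eq_true, zero_pow]

lemma phi_eq {X V : Mx m} {s : ℝ} (h : PP X s) (hRV0 : RB R V (cm V) = 0) :
    RB R (AC X s * V * AC X (-s)) (cm (AC X s * V * AC X (-s)))
      = (s:ℂ) * (2 * (RB R (DD X V) (cm V) + RB R V (cm (DD X V))))
        + (s:ℂ)^2 * QQ R X V s := by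
  rw [h.W_expand]
  have hcm : cm (V + (2*(s:ℂ)) • (X*V - V*X) + ((s:ℂ)^2) • GG X V s)
      = cm V + (2*(s:ℂ)) • cm (X*V - V*X) + ((s:ℂ)^2) • cm (GG X V s) := by
    rw [cm_add, cm_add, cm_smul, cm_smul]
    simp [Complex.conj_ofReal, _root_.map_mul, map_pow, map_ofNat]
  rw [hcm]
  simp only [map_add, _root_.map_smul, LinearMap.add_apply, LinearMap.smul_apply, smul_eq_mul]
  rw [show (X*V - V*X) = DD X V from rfl, hRV0]
  unfold QQ
  ring

end RR

/-- helper: positivity is preserved under division by a positive real scalar. -/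
lemma nonneg_of_real_mul {c : ℝ} (hc : 0 < c) {z : ℂ} (h : 0 ≤ (c:ℂ) * z) : 0 ≤ z := by
  have h1 : (0:ℂ) ≤ ((c⁻¹ : ℝ) : ℂ) := Complex.zero_le_real.2 (le_of_lt (inv_pos.2 hc))
  have h2 := mul_nonneg h1 h
  rwa [← mul_assoc, ← Complex.ofReal_mul, inv_mul_cancel₀ hc.ne', Complex.ofReal_one,
    one_mul] at h2

/-- The key inequality from the second variation along the Cayley curve. -/
lemma key {m : ℕ} (S : Set (soC m))
    (hS : ∀ v ∈ S, ∀ (A : Matrix (Fin m) (Fin m) ℂ) (hA : Aᵀ * A = 1), A.det = 1 →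
      soC.soAct A hA v ∈ S)
    (R : soC m →ₗ[ℂ] soC m →ₗ[ℂ] ℂ)
    (hRpos : ∀ ω ∈ S, 0 ≤ R ω (soC.conj ω))
    (v : soC m) (hv : v ∈ S) (hRv : R v (soC.conj v) = 0)
    (X : Mx m) (hX : Xᵀ = -X) :
    0 ≤ 4 * RB R (DD X (v:Mx m)) (cm (DD X (v:Mx m)))
      + 2 * RB R (HH X (v:Mx m)) (cm (v:Mx m)) + 2 * RB R (v:Mx m) (cm (HH X (v:Mx m))) := by
  set V : Mx m := (v : Mx m) with hVdef
  have hRV0 : RB R V (cm V) = 0 := by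
    have : cm V = ((soC.conj v : soC m) : Mx m) := rfl
    rw [this, hVdef, RB_coe]
    exact hRv
  -- positivity of φ on good parameters
  have hφpos : ∀ t : ℝ, PP X t →
      0 ≤ RB R (AC X t * V * AC X (-t)) (cm (AC X t * V * AC X (-t))) := by
    intro t ht
    have hA := ht.AC_orth hX
    have hdet := ht.AC_det hX
    have hmem := hS v hv (AC X t) hA hdet
    have h0 := hRpos _ hmem
    have hval : ((soC.soAct (AC X t) hA v : soC m) : Mx m) = AC X t * V * AC X (-t) := by
      show AC X t * V * (AC X t)⁻¹ = _
      rw [ht.AC_inv]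
    have e1 : skewL m (AC X t * V * AC X (-t)) = soC.soAct (AC X t) hA v := by
      rw [← hval]; exact skewL_coe _
    have e2 : skewL m (cm (AC X t * V * AC X (-t))) = soC.conj (soC.soAct (AC X t) hA v) := by
      have : cm (AC X t * V * AC X (-t)) = ((soC.conj (soC.soAct (AC X t) hA v) : soC m) : Mx m) := by
        rw [← hval]; rfl
      rw [this]; exact skewL_coe _
    rw [RB_apply, e1, e2]
    exact h0
  -- eventually good parameters
  have hP : ∀ᶠ s in nhds (0:ℝ), PP X s := by
    have h1 : ∀ᶠ s : ℝ in nhds (0:ℝ), ((1:Mx m) - (s:ℂ) • X).det ≠ 0 := by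
      have hc : Continuous fun s : ℝ => ((1:Mx m) - (s:ℂ) • X).det := (cont_lin X).matrix_det
      have h0 : ((1:Mx m) - ((0:ℝ):ℂ) • X).det ≠ 0 := by simp
      exact hc.continuousAt.eventually_ne h0
    have h2 : ∀ᶠ s : ℝ in nhds (0:ℝ), ((1:Mx m) + (s:ℂ) • X).det ≠ 0 := by
      have hc : Continuous fun s : ℝ => ((1:Mx m) + (s:ℂ) • X).det :=
        (continuous_const.add (Complex.continuous_ofReal.smul continuous_const)).matrix_det
      have h0 : ((1:Mx m) + ((0:ℝ):ℂ) • X).det ≠ 0 := by simp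
      exact hc.continuousAt.eventually_ne h0
    exact h1.and h2
  -- eventual positivity of symmetrized second-order coefficient
  have hev : ∀ᶠ s in nhdsWithin (0:ℝ) {(0:ℝ)}ᶜ, 0 ≤ QQ R X V s + QQ R X V (-s) := by
    filter_upwards [hP.filter_mono nhdsWithin_le_nhds, self_mem_nhdsWithin] with s hPs hs0m
    have hs0 : s ≠ 0 := hs0m
    have hPn := hPs.neg
    have h1 := hφpos s hPs
    have h2 := hφpos (-s) hPn
    have e1 := phi_eq R hPs hRV0
    have e2 := phi_eq R hPn hRV0
    push_cast at e2
    have hsum : (0:ℂ) ≤ (s:ℂ)^2 * (QQ R X V s + QQ R X V (-s)) := by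
      have h3 := add_nonneg h1 h2
      rw [e1, e2] at h3
      convert h3 using 1
      ring
    have hs2 : (0:ℝ) < s^2 := by positivity
    have : ((s^2 : ℝ) : ℂ) = (s:ℂ)^2 := by push_cast; ring
    exact nonneg_of_real_mul hs2 (by rw [this]; exact hsum)
  -- pass to the limit
  have hQc := QQ_contAt R X V
  have hQn : ContinuousAt (fun s : ℝ => QQ R X V (-s)) 0 := by
    have h : ContinuousAt (QQ R X V) ((-0:ℝ)) := by rw [neg_zero]; exact hQc
    simpa [Function.comp_def] using h.comp (continuous_neg.continuousAt (x := (0:ℝ)))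
  have htend : Filter.Tendsto (fun s : ℝ => QQ R X V s + QQ R X V (-s))
      (nhdsWithin (0:ℝ) {(0:ℝ)}ᶜ) (nhds (QQ R X V 0 + QQ R X V 0)) := by
    have := (hQc.add hQn).tendsto
    simp only [Pi.add_apply, neg_zero] at this
    exact this.mono_left nhdsWithin_le_nhds
  have hfinal : (0:ℂ) ≤ QQ R X V 0 + QQ R X V 0 := ge_of_tendsto htend hev
  have h0 : (0:ℂ) ≤ QQ R X V 0 := by
    apply nonneg_of_real_mul (show (0:ℝ) < 2 by norm_num)
    convert hfinal using 1
    push_cast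
    ring
  rw [QQ_zero] at h0
  exact h0

lemma key2 {m : ℕ} (S : Set (soC m))
    (hS : ∀ v ∈ S, ∀ (A : Matrix (Fin m) (Fin m) ℂ) (hA : Aᵀ * A = 1), A.det = 1 →
      soC.soAct A hA v ∈ S)
    (R : soC m →ₗ[ℂ] soC m →ₗ[ℂ] ℂ)
    (hRpos : ∀ ω ∈ S, 0 ≤ R ω (soC.conj ω))
    (v : soC m) (hv : v ∈ S) (hRv : R v (soC.conj v) = 0)
    (X : Mx m) (hX : Xᵀ = -X) :
    0 ≤ RB R (DD X (v:Mx m)) (cm (DD X (v:Mx m))) := by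
  have K1 := key S hS R hRpos v hv hRv X hX
  have K2 := key S hS R hRpos v hv hRv (Complex.I • X)
    (by rw [transpose_smul, hX, smul_neg])
  set V : Mx m := (v : Mx m) with hV
  have hD : DD (Complex.I • X) V = Complex.I • DD X V := by
    unfold DD
    rw [smul_mul_assoc, mul_smul_comm, smul_sub]
  have hH : HH (Complex.I • X) V = - HH X V := by
    unfold HH
    simp only [smul_pow, Complex.I_sq, smul_mul_assoc, mul_smul_comm, smul_smul,
      Complex.I_mul_I, neg_smul, one_smul, neg_mul, mul_neg, smul_neg, neg_neg]
    match_scalars <;> ring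
  rw [hD, hH, cm_smul, Complex.conj_I, cm_neg] at K2
  simp only [_root_.map_smul, map_neg, LinearMap.smul_apply, LinearMap.neg_apply,
    smul_eq_mul] at K2
  have hsum := add_nonneg K1 K2
  apply nonneg_of_real_mul (show (0:ℝ) < 8 by norm_num)
  convert hsum using 1
  push_cast
  linear_combination (4 * RB R (DD X V) (cm (DD X V))) * Complex.I_mul_I

end WilkingAux

/-- **Wilking's theorem, 'mainstep' inequality**: if the complex-bilinear extension `R` of a
symmetric bilinear form on `so(m,ℝ)` satisfies `R(ω,ω̄) ≥ 0` on an `SO(m,ℂ)`-Ad-invariant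
subset `S ⊆ so(m,ℂ)`, and `v ∈ S` satisfies `R(v,v̄) = 0`, then for every `x ∈ so(m,ℂ)`,
`R([x,v],[x̄,v̄]) ≥ 0`. -/
theorem wilking_mainstep
    (m : ℕ) (hm : 2 ≤ m) (S : Set (soC m))
    (hS : ∀ v ∈ S, ∀ (A : Matrix (Fin m) (Fin m) ℂ) (hA : Aᵀ * A = 1), A.det = 1 →
      soC.soAct A hA v ∈ S)
    (R : soC m →ₗ[ℂ] soC m →ₗ[ℂ] ℂ)
    (hRsymm : ∀ X Y, R X Y = R Y X)
    (hRreal : ∀ X Y, R (soC.conj X) (soC.conj Y) = starRingEnd ℂ (R X Y))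
    (hRpos : ∀ ω ∈ S, 0 ≤ R ω (soC.conj ω))
    (v : soC m) (hv : v ∈ S)
    (hRv : R v (soC.conj v) = 0) :
    ∀ x : soC m, 0 ≤ R (soC.ad x v) (soC.ad (soC.conj x) (soC.conj v)) := by
  intro x
  have h := WilkingAux.key2 S hS R hRpos v hv hRv (x : WilkingAux.Mx m) x.2
  have e1 : WilkingAux.DD (x : WilkingAux.Mx m) (v : WilkingAux.Mx m)
      = ((soC.ad x v : soC m) : WilkingAux.Mx m) := rfl
  have e2 : WilkingAux.cm (WilkingAux.DD (x : WilkingAux.Mx m) (v : WilkingAux.Mx m))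
      = ((soC.conj (soC.ad x v) : soC m) : WilkingAux.Mx m) := rfl
  rw [e2, e1, WilkingAux.RB_coe] at h
  have e3 : soC.conj (soC.ad x v) = soC.ad (soC.conj x) (soC.conj v) := by
    apply Subtype.ext
    show WilkingAux.cm ((x : WilkingAux.Mx m) * (v : WilkingAux.Mx m)
        - (v : WilkingAux.Mx m) * (x : WilkingAux.Mx m))
      = WilkingAux.cm (x : WilkingAux.Mx m) * WilkingAux.cm (v : WilkingAux.Mx m)
        - WilkingAux.cm (v : WilkingAux.Mx m) * WilkingAux.cm (x : WilkingAux.Mx m)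
    rw [WilkingAux.cm_sub, WilkingAux.cm_mul, WilkingAux.cm_mul]
  rwa [e3] at h

end
end
end

section
/- Let V be a finite-dimensional real vector space and let K be a GL(V)-invariant cone of algebraic curvature tensors on V, i.e. a subset of the space Sym²_B(Λ²V*) of algebraic curvature tensors such that for every T ∈ K and every invertible linear map B ∈ GL(V), the tensor T_B defined by T_B(v₁,v₂,v₃,v₄) := T(Bv₁,Bv₂,Bv₃,Bv₄) also lies in K. Let Θ ∈ K and let Υ be a linear functional on Sym²_B(Λ²V*) satisfying Υ(T) ≤ Υ(Θ) for every T ∈ K. Then for every endomorphism A of V, Υ(D_AΘ) = 0, where D_AΘ(v₁,v₂,v₃,v₄) := Θ(Av₁,v₂,v₃,v₄) + Θ(v₁,Av₂,v₃,v₄) + Θ(v₁,v₂,Av₃,v₄) + Θ(v₁,v₂,v₃,Av₄). -/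
/-!
Statement 7 (Lemma 3.2 of the paper): if `K` is a `GL(V)`-invariant cone of algebraic
curvature tensors, `Θ ∈ K`, and `Υ` is a supporting linear functional of `K` at `Θ`
(`Υ(T) ≤ Υ(Θ)` for all `T ∈ K`), then for every endomorphism `A` of `V`, `Υ(D_AΘ) = 0`.
Here `V = ℝ^d` and curvature tensors are described by their components in the standard basis;
endomorphisms/elements of `GL(V)` are described by their matrices.
-/

noncomputable section

open Matrix

/-- `Θ` (given by its components in a basis) is an algebraic curvature tensor:
antisymmetry in the first and last pairs, symmetry under exchange of the two pairs,
and the first Bianchi identity. -/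
def IsCurv {d : ℕ} (Θ : Fin d → Fin d → Fin d → Fin d → ℝ) : Prop :=
  (∀ a b c e, Θ b a c e = -Θ a b c e) ∧
  (∀ a b c e, Θ a b e c = -Θ a b c e) ∧
  (∀ a b c e, Θ c e a b = Θ a b c e) ∧
  (∀ a b c e, Θ a b c e + Θ b c a e + Θ c a b e = 0)

/-- The space `Sym²_B(Λ²V*)` of algebraic curvature tensors on `V = ℝ^d`,
described by components in the standard basis. -/
def curvSpace (d : ℕ) : Submodule ℝ (Fin d → Fin d → Fin d → Fin d → ℝ) where
  carrier := {Θ | IsCurv Θ}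
  add_mem' := by
    rintro A B ⟨hA1, hA2, hA3, hA4⟩ ⟨hB1, hB2, hB3, hB4⟩
    refine ⟨fun a b c e => ?_, fun a b c e => ?_, fun a b c e => ?_, fun a b c e => ?_⟩ <;>
      simp only [Pi.add_apply]
    · rw [hA1, hB1]; ring
    · rw [hA2, hB2]; ring
    · rw [hA3, hB3]
    · linarith [hA4 a b c e, hB4 a b c e]
  zero_mem' := by
    refine ⟨fun a b c e => ?_, fun a b c e => ?_, fun a b c e => ?_, fun a b c e => ?_⟩ <;> simp
  smul_mem' := by
    rintro r A ⟨hA1, hA2, hA3, hA4⟩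
    refine ⟨fun a b c e => ?_, fun a b c e => ?_, fun a b c e => ?_, fun a b c e => ?_⟩ <;>
      simp only [Pi.smul_apply, smul_eq_mul]
    · rw [hA1]; ring
    · rw [hA2]; ring
    · rw [hA3]
    · linear_combination r * hA4 a b c e

/-- The first-variation tensor `D_AΘ(v₁,v₂,v₃,v₄) = Θ(Av₁,v₂,v₃,v₄) + Θ(v₁,Av₂,v₃,v₄)
+ Θ(v₁,v₂,Av₃,v₄) + Θ(v₁,v₂,v₃,Av₄)`, in components. -/
def DAfun {d : ℕ} (A : Matrix (Fin d) (Fin d) ℝ) (Θ : Fin d → Fin d → Fin d → Fin d → ℝ) :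
    Fin d → Fin d → Fin d → Fin d → ℝ :=
  fun a b c e => ∑ f, (A f a * Θ f b c e + A f b * Θ a f c e + A f c * Θ a b f e + A f e * Θ a b c f)

lemma DAfun_mem {d : ℕ} (A : Matrix (Fin d) (Fin d) ℝ) {Θ : Fin d → Fin d → Fin d → Fin d → ℝ}
    (hΘ : IsCurv Θ) : DAfun A Θ ∈ curvSpace d := by
  obtain ⟨h1, h2, h3, h4⟩ := hΘ
  refine ⟨fun a b c e => ?_, fun a b c e => ?_, fun a b c e => ?_, fun a b c e => ?_⟩
  · show DAfun A Θ b a c e = -DAfun A Θ a b c e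
    unfold DAfun
    rw [← Finset.sum_neg_distrib]
    refine Finset.sum_congr rfl fun f _ => ?_
    linear_combination A f b * h1 a f c e + A f a * h1 f b c e + A f c * h1 a b f e
      + A f e * h1 a b c f
  · show DAfun A Θ a b e c = -DAfun A Θ a b c e
    unfold DAfun
    rw [← Finset.sum_neg_distrib]
    refine Finset.sum_congr rfl fun f _ => ?_
    linear_combination A f a * h2 f b c e + A f b * h2 a f c e + A f e * h2 a b c f
      + A f c * h2 a b f e
  · show DAfun A Θ c e a b = DAfun A Θ a b c e
    unfold DAfun
    refine Finset.sum_congr rfl fun f _ => ?_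
    linear_combination A f c * h3 a b f e + A f e * h3 a b c f + A f a * h3 f b c e
      + A f b * h3 a f c e
  · show DAfun A Θ a b c e + DAfun A Θ b c a e + DAfun A Θ c a b e = 0
    unfold DAfun
    rw [← Finset.sum_add_distrib, ← Finset.sum_add_distrib]
    refine Finset.sum_eq_zero fun f _ => ?_
    linear_combination A f a * h4 f b c e + A f b * h4 f c a e + A f c * h4 f a b e
      + A f e * h4 a b c f

/-- The pullback `T_B(v₁,v₂,v₃,v₄) = T(Bv₁,Bv₂,Bv₃,Bv₄)`, in components. -/
def pullQ {d : ℕ} (B : Matrix (Fin d) (Fin d) ℝ) (Θ : Fin d → Fin d → Fin d → Fin d → ℝ) :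
    Fin d → Fin d → Fin d → Fin d → ℝ :=
  fun a b c e => ∑ p, ∑ q, ∑ r, ∑ s, B p a * B q b * B r c * B s e * Θ p q r s

/-- `D_AΘ` as an element of the curvature space. -/
def DAcurv {d : ℕ} (A : Matrix (Fin d) (Fin d) ℝ) (Θ : curvSpace d) : curvSpace d :=
  ⟨DAfun A (Θ : Fin d → Fin d → Fin d → Fin d → ℝ), DAfun_mem A Θ.2⟩



abbrev Quad (d : ℕ) := Fin d × Fin d × Fin d × Fin d

lemma nested4 {d : ℕ} (h : Fin d → Fin d → Fin d → Fin d → ℝ) :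
    (∑ p, ∑ q, ∑ r, ∑ s, h p q r s) = ∑ x : Quad d, h x.1 x.2.1 x.2.2.1 x.2.2.2 := by
  simp [Fintype.sum_prod_type]

lemma pullQ_isCurv {d : ℕ} (B : Matrix (Fin d) (Fin d) ℝ)
    {Θ : Fin d → Fin d → Fin d → Fin d → ℝ} (hΘ : IsCurv Θ) : IsCurv (pullQ B Θ) := by
  obtain ⟨h1, h2, h3, h4⟩ := hΘ
  refine ⟨fun a b c e => ?_, fun a b c e => ?_, fun a b c e => ?_, fun a b c e => ?_⟩ <;>
    unfold pullQ
  · rw [nested4 (fun p q r s => B p b * B q a * B r c * B s e * Θ p q r s),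
      nested4 (fun p q r s => B p a * B q b * B r c * B s e * Θ p q r s),
      ← Finset.sum_neg_distrib]
    refine Eq.trans (Finset.sum_congr rfl fun x _ => ?_)
      (Equiv.sum_comp (⟨fun x => (x.2.1, x.1, x.2.2), fun x => (x.2.1, x.1, x.2.2),
        fun x => rfl, fun x => rfl⟩ : Quad d ≃ Quad d)
        (fun x : Quad d => -(B x.1 a * B x.2.1 b * B x.2.2.1 c * B x.2.2.2 e
          * Θ x.1 x.2.1 x.2.2.1 x.2.2.2)))
    show B x.1 b * B x.2.1 a * B x.2.2.1 c * B x.2.2.2 e * Θ x.1 x.2.1 x.2.2.1 x.2.2.2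
      = -(B x.2.1 a * B x.1 b * B x.2.2.1 c * B x.2.2.2 e * Θ x.2.1 x.1 x.2.2.1 x.2.2.2)
    linear_combination (B x.2.1 a * B x.1 b * B x.2.2.1 c * B x.2.2.2 e) *
      h1 x.2.1 x.1 x.2.2.1 x.2.2.2
  · rw [nested4 (fun p q r s => B p a * B q b * B r e * B s c * Θ p q r s),
      nested4 (fun p q r s => B p a * B q b * B r c * B s e * Θ p q r s),
      ← Finset.sum_neg_distrib]
    refine Eq.trans (Finset.sum_congr rfl fun x _ => ?_)
      (Equiv.sum_comp (⟨fun x => (x.1, x.2.1, x.2.2.2, x.2.2.1),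
        fun x => (x.1, x.2.1, x.2.2.2, x.2.2.1), fun x => rfl, fun x => rfl⟩ : Quad d ≃ Quad d)
        (fun x : Quad d => -(B x.1 a * B x.2.1 b * B x.2.2.1 c * B x.2.2.2 e
          * Θ x.1 x.2.1 x.2.2.1 x.2.2.2)))
    show B x.1 a * B x.2.1 b * B x.2.2.1 e * B x.2.2.2 c * Θ x.1 x.2.1 x.2.2.1 x.2.2.2
      = -(B x.1 a * B x.2.1 b * B x.2.2.2 c * B x.2.2.1 e * Θ x.1 x.2.1 x.2.2.2 x.2.2.1)
    linear_combination (B x.1 a * B x.2.1 b * B x.2.2.2 c * B x.2.2.1 e) *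
      h2 x.1 x.2.1 x.2.2.2 x.2.2.1
  · rw [nested4 (fun p q r s => B p c * B q e * B r a * B s b * Θ p q r s),
      nested4 (fun p q r s => B p a * B q b * B r c * B s e * Θ p q r s)]
    refine Eq.trans (Finset.sum_congr rfl fun x _ => ?_)
      (Equiv.sum_comp (⟨fun x => (x.2.2.1, x.2.2.2, x.1, x.2.1),
        fun x => (x.2.2.1, x.2.2.2, x.1, x.2.1), fun x => rfl, fun x => rfl⟩ : Quad d ≃ Quad d)
        (fun x : Quad d => B x.1 a * B x.2.1 b * B x.2.2.1 c * B x.2.2.2 e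
          * Θ x.1 x.2.1 x.2.2.1 x.2.2.2))
    show B x.1 c * B x.2.1 e * B x.2.2.1 a * B x.2.2.2 b * Θ x.1 x.2.1 x.2.2.1 x.2.2.2
      = B x.2.2.1 a * B x.2.2.2 b * B x.1 c * B x.2.1 e * Θ x.2.2.1 x.2.2.2 x.1 x.2.1
    linear_combination (B x.2.2.1 a * B x.2.2.2 b * B x.1 c * B x.2.1 e) *
      (h3 x.2.2.1 x.2.2.2 x.1 x.2.1)
  · rw [nested4 (fun p q r s => B p a * B q b * B r c * B s e * Θ p q r s),
      nested4 (fun p q r s => B p b * B q c * B r a * B s e * Θ p q r s),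
      nested4 (fun p q r s => B p c * B q a * B r b * B s e * Θ p q r s)]
    have e2 : (∑ x : Quad d, B x.1 b * B x.2.1 c * B x.2.2.1 a * B x.2.2.2 e
        * Θ x.1 x.2.1 x.2.2.1 x.2.2.2)
      = ∑ x : Quad d, B x.1 a * B x.2.1 b * B x.2.2.1 c * B x.2.2.2 e
        * Θ x.2.1 x.2.2.1 x.1 x.2.2.2 := by
      refine Eq.trans (Finset.sum_congr rfl fun x _ => ?_)
        (Equiv.sum_comp (⟨fun x => (x.2.2.1, x.1, x.2.1, x.2.2.2),
          fun x => (x.2.1, x.2.2.1, x.1, x.2.2.2), fun x => rfl, fun x => rfl⟩ : Quad d ≃ Quad d)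
          (fun x : Quad d => B x.1 a * B x.2.1 b * B x.2.2.1 c * B x.2.2.2 e
            * Θ x.2.1 x.2.2.1 x.1 x.2.2.2))
      show B x.1 b * B x.2.1 c * B x.2.2.1 a * B x.2.2.2 e * Θ x.1 x.2.1 x.2.2.1 x.2.2.2
        = B x.2.2.1 a * B x.1 b * B x.2.1 c * B x.2.2.2 e * Θ x.1 x.2.1 x.2.2.1 x.2.2.2
      ring
    have e3 : (∑ x : Quad d, B x.1 c * B x.2.1 a * B x.2.2.1 b * B x.2.2.2 e
        * Θ x.1 x.2.1 x.2.2.1 x.2.2.2)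
      = ∑ x : Quad d, B x.1 a * B x.2.1 b * B x.2.2.1 c * B x.2.2.2 e
        * Θ x.2.2.1 x.1 x.2.1 x.2.2.2 := by
      refine Eq.trans (Finset.sum_congr rfl fun x _ => ?_)
        (Equiv.sum_comp (⟨fun x => (x.2.1, x.2.2.1, x.1, x.2.2.2),
          fun x => (x.2.2.1, x.1, x.2.1, x.2.2.2), fun x => rfl, fun x => rfl⟩ : Quad d ≃ Quad d)
          (fun x : Quad d => B x.1 a * B x.2.1 b * B x.2.2.1 c * B x.2.2.2 e
            * Θ x.2.2.1 x.1 x.2.1 x.2.2.2))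
      show B x.1 c * B x.2.1 a * B x.2.2.1 b * B x.2.2.2 e * Θ x.1 x.2.1 x.2.2.1 x.2.2.2
        = B x.2.1 a * B x.2.2.1 b * B x.1 c * B x.2.2.2 e * Θ x.1 x.2.1 x.2.2.1 x.2.2.2
      ring
    rw [e2, e3, ← Finset.sum_add_distrib, ← Finset.sum_add_distrib]
    refine Finset.sum_eq_zero fun x _ => ?_
    linear_combination (B x.1 a * B x.2.1 b * B x.2.2.1 c * B x.2.2.2 e) *
      h4 x.1 x.2.1 x.2.2.1 x.2.2.2

lemma pullQ_one' {d : ℕ} (Θ : Fin d → Fin d → Fin d → Fin d → ℝ) : pullQ 1 Θ = Θ := by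
  funext a b c e
  simp [pullQ, Matrix.one_apply, Finset.sum_ite_eq, ite_mul, Finset.sum_ite_eq']

lemma hasDerivAt_entry' {d : ℕ} (A : Matrix (Fin d) (Fin d) ℝ) (p q : Fin d) :
    HasDerivAt (fun α : ℝ => (1 + α • A) p q) (A p q) 0 := by
  have h := ((hasDerivAt_id (0:ℝ)).mul_const (A p q)).const_add
    ((1 : Matrix (Fin d) (Fin d) ℝ) p q)
  simpa [Matrix.add_apply, Matrix.smul_apply, smul_eq_mul, id] using h

lemma hasDerivAt_pull' {d : ℕ} (A : Matrix (Fin d) (Fin d) ℝ)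
    (Θ : Fin d → Fin d → Fin d → Fin d → ℝ) (a b c e : Fin d) :
    HasDerivAt (fun α : ℝ => pullQ (1 + α • A) Θ a b c e) (DAfun A Θ a b c e) 0 := by
  set O : Matrix (Fin d) (Fin d) ℝ := 1 with hO
  have term : ∀ p q r s : Fin d, HasDerivAt
      (fun α : ℝ => (1 + α • A) p a * (1 + α • A) q b * (1 + α • A) r c * (1 + α • A) s e
        * Θ p q r s)
      ((((A p a * O q b + O p a * A q b) * O r c + O p a * O q b * A r c) * O s e
        + O p a * O q b * O r c * A s e) * Θ p q r s) 0 := by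
    intro p q r s
    have h := ((((hasDerivAt_entry' A p a).fun_mul (hasDerivAt_entry' A q b)).fun_mul
      (hasDerivAt_entry' A r c)).fun_mul (hasDerivAt_entry' A s e)).mul_const (Θ p q r s)
    have h0 : (1 + (0:ℝ) • A) = O := by simp [hO]
    rw [h0] at h
    exact h
  have hsum : HasDerivAt (fun α : ℝ => pullQ (1 + α • A) Θ a b c e)
      (∑ p, ∑ q, ∑ r, ∑ s, (((A p a * O q b + O p a * A q b) * O r c
        + O p a * O q b * A r c) * O s e + O p a * O q b * O r c * A s e) * Θ p q r s) 0 := by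
    unfold pullQ
    exact HasDerivAt.fun_sum fun p _ => HasDerivAt.fun_sum fun q _ => HasDerivAt.fun_sum fun r _ =>
      HasDerivAt.fun_sum fun s _ => term p q r s
  convert hsum using 1
  unfold DAfun
  rw [hO]
  simp only [Matrix.one_apply, mul_ite, ite_mul, mul_one, mul_zero, one_mul, zero_mul,
    add_mul, Finset.sum_add_distrib, Finset.sum_ite_eq, Finset.sum_ite_eq',
    Finset.mem_univ, if_true, zero_add, add_zero, Finset.sum_ite_irrel, Finset.sum_const_zero]

/-- **Lemma 3.2 of the paper**: let `K` be a `GL(V)`-invariant cone of algebraic curvature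
tensors (i.e. `T ∈ K` and `B ∈ GL(V)` imply `T_B ∈ K`, `T_B(v₁,v₂,v₃,v₄) = T(Bv₁,Bv₂,Bv₃,Bv₄)`),
let `Θ ∈ K`, and let `Υ` be a linear functional on the space of algebraic curvature tensors
with `Υ(T) ≤ Υ(Θ)` for all `T ∈ K`. Then for every endomorphism `A` of `V`, `Υ(D_AΘ) = 0`. -/
theorem supporting_functional_vanishes_on_first_variation
    (d : ℕ) (K : Set (curvSpace d))
    (hK : ∀ T ∈ K, ∀ B : Matrix (Fin d) (Fin d) ℝ, IsUnit B.det →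
      ∀ T' : curvSpace d,
        (T' : Fin d → Fin d → Fin d → Fin d → ℝ)
          = pullQ B (T : Fin d → Fin d → Fin d → Fin d → ℝ) → T' ∈ K)
    (Θ : curvSpace d) (hΘ : Θ ∈ K)
    (Υ : curvSpace d →ₗ[ℝ] ℝ) (hΥ : ∀ T ∈ K, Υ T ≤ Υ Θ)
    (A : Matrix (Fin d) (Fin d) ℝ) :
    Υ (DAcurv A Θ) = 0 := by
  obtain ⟨Υ', hΥ'⟩ := LinearMap.exists_extend Υ
  have hext : ∀ T : curvSpace d, Υ' (T : Fin d → Fin d → Fin d → Fin d → ℝ) = Υ T :=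
    fun T => LinearMap.congr_fun hΥ' T
  let Υc : (Fin d → Fin d → Fin d → Fin d → ℝ) →L[ℝ] ℝ := LinearMap.toContinuousLinearMap Υ'
  have hΥc : ∀ v, Υc v = Υ' v := fun v => rfl
  set g : ℝ → (Fin d → Fin d → Fin d → Fin d → ℝ) :=
    fun α => pullQ (1 + α • A) (Θ : Fin d → Fin d → Fin d → Fin d → ℝ) with hgdef
  have hg : HasDerivAt g (DAfun A (Θ : Fin d → Fin d → Fin d → Fin d → ℝ)) 0 := by
    rw [hasDerivAt_pi]; intro a
    rw [hasDerivAt_pi]; intro b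
    rw [hasDerivAt_pi]; intro c
    rw [hasDerivAt_pi]; intro e
    exact hasDerivAt_pull' A _ a b c e
  have hf : HasDerivAt (fun α => Υc (g α))
      (Υc (DAfun A (Θ : Fin d → Fin d → Fin d → Fin d → ℝ))) 0 :=
    Υc.hasFDerivAt.comp_hasDerivAt 0 hg
  have hg0 : g 0 = (Θ : Fin d → Fin d → Fin d → Fin d → ℝ) := by
    rw [hgdef]; simp [pullQ_one']
  have hdetcont : ContinuousAt (fun α : ℝ => (1 + α • A).det) 0 := by
    have : Continuous fun α : ℝ => (1 + α • A) := by
      apply continuous_const.add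
      exact continuous_id.smul continuous_const
    exact this.matrix_det.continuousAt
  have hdet0 : (1 + (0:ℝ) • A).det ≠ 0 := by simp
  have hmax : IsLocalMax (fun α => Υc (g α)) 0 := by
    filter_upwards [hdetcont.eventually_ne hdet0] with α hα
    have hu : IsUnit (1 + α • A).det := isUnit_iff_ne_zero.mpr hα
    have hmem : g α ∈ curvSpace d := pullQ_isCurv (1 + α • A) Θ.2
    have hK' : (⟨g α, hmem⟩ : curvSpace d) ∈ K := hK Θ hΘ (1 + α • A) hu ⟨g α, hmem⟩ rfl
    have h1 : Υc (g α) = Υ ⟨g α, hmem⟩ := hext ⟨g α, hmem⟩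
    have h2 : Υc (g 0) = Υ Θ := by rw [hg0]; exact hext Θ
    calc Υc (g α) = Υ ⟨g α, hmem⟩ := h1
      _ ≤ Υ Θ := hΥ _ hK'
      _ = Υc (g 0) := h2.symm
  have hzero := hmax.hasDerivAt_eq_zero hf
  calc Υ (DAcurv A Θ) = Υc (DAfun A (Θ : Fin d → Fin d → Fin d → Fin d → ℝ)) :=
        (hext (DAcurv A Θ)).symm
    _ = 0 := hzero


end
end
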